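/- arXiv:1411.1531 — 7 statements merged into one kernel-verified Lean document; each statement's English description precedes it below -/
import Mathlib

section
/- Let s ≥ 2 be an integer and P > 0 a real number. Let v be an exponential random variable with rate 1 and let y be a Gamma-distributed random variable with shape s−1 and rate 1, with v and y independent. Then for every x ≥ 0, the probability that v/(s/P + y) > x equals e^{−s x/P} / (1+x)^{s−1}. -/
open MeasureTheory ProbabilityTheory Real

lemma expMeasure_one_Ioi {t : ℝ} (ht : 0 ≤ t) :
    expMeasure 1 (Set.Ioi t) = ENNReal.ofReal (Real.exp (-t)) := by
  have hp : IsProbabilityMeasure (expMeasure 1) := isProbabilityMeasure_expMeasure one_pos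
  have hIic : expMeasure 1 (Set.Iic t) = ENNReal.ofReal (1 - Real.exp (-t)) := by
    have h := lintegral_exponentialPDF_eq_antiDeriv one_pos t
    rw [if_pos ht, one_mul] at h
    rw [expMeasure, gammaMeasure, withDensity_apply _ measurableSet_Iic]
    simpa [exponentialPDF, exponentialPDFReal, gammaPDF] using h
  have hc : expMeasure 1 (Set.Ioi t) = 1 - expMeasure 1 (Set.Iic t) := by
    rw [← Set.compl_Iic, prob_compl_eq_one_sub measurableSet_Iic]
  rw [hc, hIic, ENNReal.ofReal_sub _ (exp_nonneg _), ENNReal.ofReal_one,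
    ENNReal.sub_sub_cancel ENNReal.one_ne_top]
  exact ENNReal.ofReal_le_one.mpr (exp_le_one_iff.mpr (by linarith))

lemma lintegral_exp_neg_gammaMeasure {a x : ℝ} (ha : 0 < a) (hx : 0 ≤ x) :
    ∫⁻ b, ENNReal.ofReal (Real.exp (-(x * b))) ∂(gammaMeasure a 1) =
      ENNReal.ofReal ((1 / (1 + x)) ^ a) := by
  have h1x : (0:ℝ) < 1 + x := by linarith
  have hmg : Measurable fun b : ℝ => ENNReal.ofReal (Real.exp (-(x * b))) := by fun_prop
  have hmf : Measurable (gammaPDF a 1) := (measurable_gammaPDFReal a 1).ennreal_ofReal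
  rw [gammaMeasure, lintegral_withDensity_eq_lintegral_mul _ hmf hmg]
  rw [← lintegral_add_compl _ measurableSet_Ici, Set.compl_Ici]
  have hIio : ∫⁻ b in Set.Iio 0,
      (gammaPDF a 1 * fun b => ENNReal.ofReal (Real.exp (-(x * b)))) b = 0 := by
    rw [setLIntegral_congr_fun_ae (g := fun _ => 0) measurableSet_Iio]
    · simp
    · filter_upwards with b (hb : b < 0)
      simp [gammaPDF_of_neg hb]
  rw [hIio, add_zero]
  have hg : ∀ b ∈ Set.Ici (0:ℝ),
      (gammaPDF a 1 * fun b => ENNReal.ofReal (Real.exp (-(x * b)))) b =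
        ENNReal.ofReal ((1 / Real.Gamma a) * (b ^ (a - 1) * Real.exp (-((1 + x) * b)))) := by
    intro b hb
    simp only [Pi.mul_apply, gammaPDF_of_nonneg hb]
    rw [← ENNReal.ofReal_mul (mul_nonneg (mul_nonneg (by positivity)
      (Real.rpow_nonneg hb _)) (Real.exp_nonneg _))]
    congr 1
    rw [Real.one_rpow, mul_assoc, mul_assoc, ← Real.exp_add,
      show -(1*b) + -(x*b) = -((1+x)*b) from by ring]
  rw [setLIntegral_congr_fun_ae measurableSet_Ici (ae_of_all _ hg)]
  have hint : IntegrableOn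
      (fun b : ℝ => (1 / Real.Gamma a) * (b ^ (a - 1) * Real.exp (-((1 + x) * b))))
      (Set.Ici 0) := by
    rw [integrableOn_Ici_iff_integrableOn_Ioi]
    refine (((integrableOn_rpow_mul_exp_neg_mul_rpow (p := 1) (s := a - 1) (b := 1 + x)
      (by linarith) one_pos h1x).congr_fun ?_ measurableSet_Ioi)).const_mul _
    intro b hb
    simp only [Real.rpow_one]
    rw [show -(1+x)*b = -((1+x)*b) from by ring]
  rw [← ofReal_integral_eq_lintegral_ofReal hint ((ae_restrict_iff' measurableSet_Ici).mpr (ae_of_all _ (fun b hb =>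
    mul_nonneg (by positivity) (mul_nonneg (Real.rpow_nonneg hb _) (Real.exp_nonneg _)))))]
  congr 1
  rw [MeasureTheory.integral_Ici_eq_integral_Ioi, integral_const_mul,
    integral_rpow_mul_exp_neg_mul_Ioi ha h1x]
  rw [one_div, one_div, ← mul_assoc, inv_mul_eq_div,
    div_mul_cancel₀ _ (Real.Gamma_pos_of_pos ha).ne']

/-- Let `s ≥ 2` be an integer and `P > 0` a real number. Let `v` be an
exponential random variable with rate `1` and `y` a Gamma-distributed random variable with
shape `s − 1` and rate `1`, independent of `v`. Then for every `x ≥ 0`,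
`ℙ(v / (s/P + y) > x) = exp (−s x / P) / (1 + x) ^ (s − 1)`. -/
theorem sinr_survival_of_exp_gamma
    {Ω : Type*} [MeasurableSpace Ω] (μ : Measure Ω) [IsProbabilityMeasure μ]
    (s : ℕ) (hs : 2 ≤ s) (P : ℝ) (hP : 0 < P)
    (v y : Ω → ℝ) (hvmeas : Measurable v) (hymeas : Measurable y)
    (hv : μ.map v = expMeasure 1)
    (hy : μ.map y = gammaMeasure (s - 1 : ℕ) 1)
    (hindep : IndepFun v y μ)
    (x : ℝ) (hx : 0 ≤ x) :
    μ {ω | x < v ω / ((s : ℝ) / P + y ω)} =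
      ENNReal.ofReal (Real.exp (-((s : ℝ) * x) / P) / (1 + x) ^ (s - 1)) := by
  haveI hpe : IsProbabilityMeasure (expMeasure 1) := isProbabilityMeasure_expMeasure one_pos
  have ha0 : (0:ℝ) < ((s - 1 : ℕ) : ℝ) := by
    have : 0 < s - 1 := by omega
    exact_mod_cast this
  haveI hpg : IsProbabilityMeasure (gammaMeasure (s - 1 : ℕ) 1) :=
    isProbabilityMeasure_gammaMeasure ha0 one_pos
  set c : ℝ := (s : ℝ) / P with hcdef
  have hc0 : 0 < c := div_pos (by exact_mod_cast Nat.cast_pos.mpr (by omega)) hP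
  set S : Set (ℝ × ℝ) := {p | x < p.1 / (c + p.2)} with hSdef
  have hS : MeasurableSet S :=
    measurableSet_lt measurable_const (measurable_fst.div (measurable_const.add measurable_snd))
  have hmap : μ.map (fun ω => (v ω, y ω)) = (expMeasure 1).prod (gammaMeasure (s - 1 : ℕ) 1) := by
    rw [← hv, ← hy]
    exact (indepFun_iff_map_prod_eq_prod_map_map hvmeas.aemeasurable hymeas.aemeasurable).mp hindep
  have h1 : μ {ω | x < v ω / (c + y ω)} = ((expMeasure 1).prod (gammaMeasure (s - 1 : ℕ) 1)) S := by
    rw [← hmap, Measure.map_apply (hvmeas.prodMk hymeas) hS]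
    rfl
  rw [h1, Measure.prod_apply_symm hS]
  have hnull : (gammaMeasure (s - 1 : ℕ) 1) (Set.Iio 0) = 0 := by
    rw [gammaMeasure, withDensity_apply _ measurableSet_Iio]
    exact lintegral_gammaPDF_of_nonpos le_rfl
  have hae : ∀ᵐ b ∂(gammaMeasure (s - 1 : ℕ) 1),
      expMeasure 1 ((fun a => (a, b)) ⁻¹' S) =
        ENNReal.ofReal (Real.exp (-(x * c))) * ENNReal.ofReal (Real.exp (-(x * b))) := by
    rw [ae_iff]
    refine measure_mono_null (fun b hb => ?_) hnull
    simp only [Set.mem_setOf_eq] at hb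
    rw [Set.mem_Iio]
    by_contra hb0'
    have hb0 : 0 ≤ b := not_lt.mp hb0'
    have hcb : 0 < c + b := by linarith
    apply hb
    have hpre : (fun a => (a, b)) ⁻¹' S = Set.Ioi (x * (c + b)) := by
      ext a
      simp only [hSdef, Set.mem_preimage, Set.mem_Ioi, Set.mem_setOf_eq]
      rw [lt_div_iff₀ hcb]
    rw [hpre, expMeasure_one_Ioi (by positivity), ← ENNReal.ofReal_mul (Real.exp_nonneg _),
      ← Real.exp_add, show -(x * c) + -(x * b) = -(x * (c + b)) from by ring]
  rw [lintegral_congr_ae hae,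
    lintegral_const_mul _ (by fun_prop : Measurable fun b : ℝ => ENNReal.ofReal (Real.exp (-(x * b)))),
    lintegral_exp_neg_gammaMeasure ha0 hx, ← ENNReal.ofReal_mul (Real.exp_nonneg _)]
  congr 1
  rw [Real.rpow_natCast, one_div, inv_pow, div_eq_mul_inv]
  congr 2
  rw [hcdef]
  ring
end

section
/- Fix an integer s ≥ 1 and a real P > 0, and let F_{s,P}(x) = 1 − e^{−s x/P}/(1+x)^{s−1} for x ≥ 0 be the SINR distribution function, with density f_{s,P}(x) = F_{s,P}′(x). Then the growth function (1 − F_{s,P}(x)) / f_{s,P}(x) converges to P/s as x → ∞. -/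
open Real Filter

/-- The survival function `G_{s,P}(x) = exp (−s x / P) / (1 + x) ^ (s − 1)` of the
INR-SINR(s,P) distribution. -/
noncomputable def sinrSurvival (s : ℕ) (P x : ℝ) : ℝ :=
  Real.exp (-((s : ℝ) * x) / P) / (1 + x) ^ (s - 1)

/-- The distribution function `F_{s,P} = 1 − G_{s,P}` of the INR-SINR(s,P) distribution. -/
noncomputable def sinrCDF (s : ℕ) (P x : ℝ) : ℝ := 1 - sinrSurvival s P x

lemma pow_pred_mul (m : ℕ) (x : ℝ) : (m : ℝ) * (1 + x) ^ (m - 1) * (1 + x) = m * (1 + x) ^ m := by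
  cases m with
  | zero => simp
  | succ k => simp [pow_succ, mul_assoc]

lemma deriv_sinrCDF (m : ℕ) (P x : ℝ) (hP : 0 < P) (hx : 0 < 1 + x) :
    deriv (sinrCDF (m + 1) P) x
      = sinrSurvival (m + 1) P x * (((m : ℝ) + 1) / P + (m : ℝ) / (1 + x)) := by
  have hdne : (1 + x) ^ m ≠ 0 := pow_ne_zero _ (ne_of_gt hx)
  have hlin : HasDerivAt (fun y : ℝ => -(((m : ℝ) + 1) * y) / P) (-((m : ℝ) + 1) / P) x := by
    simpa using (((hasDerivAt_id x).const_mul ((m : ℝ) + 1)).neg.div_const P)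
  have he : HasDerivAt (fun y : ℝ => Real.exp (-(((m : ℝ) + 1) * y) / P))
      (Real.exp (-(((m : ℝ) + 1) * x) / P) * (-((m : ℝ) + 1) / P)) x := hlin.exp
  have hd : HasDerivAt (fun y : ℝ => (1 + y) ^ m)
      ((m : ℝ) * (1 + x) ^ (m - 1) * 1) x := by
    simpa [Function.comp_def] using (hasDerivAt_pow m (1 + x)).comp x ((hasDerivAt_id x).const_add (1:ℝ))
  have hG : HasDerivAt (sinrSurvival (m + 1) P)
      ((Real.exp (-(((m : ℝ) + 1) * x) / P) * (-((m : ℝ) + 1) / P) * (1 + x) ^ m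
        - Real.exp (-(((m : ℝ) + 1) * x) / P) * ((m : ℝ) * (1 + x) ^ (m - 1) * 1))
        / ((1 + x) ^ m) ^ 2) x := by
    have hfun : sinrSurvival (m + 1) P
        = fun y : ℝ => Real.exp (-(((m : ℝ) + 1) * y) / P) / (1 + y) ^ m := by
      funext y
      simp only [sinrSurvival, Nat.add_sub_cancel]
      push_cast
      ring_nf
    rw [hfun]
    exact he.div hd hdne
  have hF : HasDerivAt (sinrCDF (m + 1) P)
      (-((Real.exp (-(((m : ℝ) + 1) * x) / P) * (-((m : ℝ) + 1) / P) * (1 + x) ^ m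
        - Real.exp (-(((m : ℝ) + 1) * x) / P) * ((m : ℝ) * (1 + x) ^ (m - 1) * 1))
        / ((1 + x) ^ m) ^ 2)) x := by
    exact hG.const_sub (1:ℝ)
  rw [hF.deriv]
  have key := pow_pred_mul m x
  unfold sinrSurvival
  simp only [Nat.add_sub_cancel, Nat.cast_add, Nat.cast_one]
  have hxne : (1 + x) ≠ 0 := ne_of_gt hx
  have key2 : (m : ℝ) * (1 + x) ^ (m - 1) * 1 = (m : ℝ) * (1 + x) ^ m / (1 + x) := by
    rw [eq_div_iff hxne, mul_one]
    exact key
  rw [key2]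
  field_simp
  ring


/-- For integer `s ≥ 1` and real `P > 0`, the growth function
`(1 − F_{s,P}(x)) / F_{s,P}′(x)` of the SINR distribution converges to `P / s`
as `x → ∞`. -/
theorem sinr_growth_function_tendsto
    (s : ℕ) (hs : 1 ≤ s) (P : ℝ) (hP : 0 < P) :
    Tendsto (fun x : ℝ => (1 - sinrCDF s P x) / deriv (sinrCDF s P) x)
      atTop (nhds (P / s)) := by
  obtain ⟨m, rfl⟩ : ∃ m, s = m + 1 := ⟨s - 1, (Nat.succ_pred_eq_of_pos hs).symm⟩
  have hlim : Tendsto (fun x : ℝ => (((m : ℝ) + 1) / P + (m : ℝ) / (1 + x))⁻¹)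
      atTop (nhds (P / ((m : ℕ) + 1 : ℕ))) := by
    have h1 : Tendsto (fun x : ℝ => 1 + x) atTop atTop :=
      tendsto_atTop_add_const_left _ 1 tendsto_id
    have h2 : Tendsto (fun x : ℝ => (m : ℝ) / (1 + x)) atTop (nhds 0) := by
      simpa [div_eq_mul_inv] using h1.inv_tendsto_atTop.const_mul (m : ℝ)
    have h3 : Tendsto (fun x : ℝ => ((m : ℝ) + 1) / P + (m : ℝ) / (1 + x)) atTop
        (nhds (((m : ℝ) + 1) / P)) := by
      simpa using (tendsto_const_nhds.add h2)
    have hne : ((m : ℝ) + 1) / P ≠ 0 := by positivity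
    have := h3.inv₀ hne
    simpa [inv_div, Nat.cast_add, Nat.cast_one] using this
  refine hlim.congr' ?_
  filter_upwards [eventually_gt_atTop 0] with x hx
  have hx1 : 0 < 1 + x := by linarith
  have hGpos : 0 < sinrSurvival (m + 1) P x := by
    unfold sinrSurvival
    positivity
  have hcpos : 0 < ((m : ℝ) + 1) / P + (m : ℝ) / (1 + x) := by positivity
  rw [deriv_sinrCDF m P x hP hx1]
  have : (1 - sinrCDF (m + 1) P x) = sinrSurvival (m + 1) P x := by
    unfold sinrCDF; ring
  rw [this, eq_comm, div_mul_cancel_left₀ (ne_of_gt hGpos)]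
end

section
/- Fix an integer s ≥ 1 and a real P > 0. For each N ≥ 2 let X_1, …, X_N be i.i.d. random variables with the INR-SINR(s,P) distribution. Then (max_{1≤i≤N} X_i) / log N converges in probability to P/s as N → ∞. -/
open MeasureTheory ProbabilityTheory Real Filter

/-- A real random variable `X` has the INR-SINR(s,P) distribution: it has survival function
`G_{s,P}(x) = exp (−s x / P) / (1 + x) ^ (s − 1)` for `x ≥ 0`. -/
def HasSINRDist {Ω : Type*} [MeasurableSpace Ω] (μ : Measure Ω) (X : Ω → ℝ)
    (s : ℕ) (P : ℝ) : Prop :=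
  Measurable X ∧ ∀ x : ℝ, 0 ≤ x →
    μ {ω | x < X ω} = ENNReal.ofReal (Real.exp (-((s : ℝ) * x) / P) / (1 + x) ^ (s - 1))

open Topology

/-- survival function -/
noncomputable def sinrG (s : ℕ) (P : ℝ) (b : ℝ) : ℝ :=
  Real.exp (-((s : ℝ) * b) / P) / (1 + b) ^ (s - 1)

lemma sinrG_pos (s : ℕ) (P : ℝ) {b : ℝ} (hb : 0 ≤ b) : 0 < sinrG s P b := by
  have : (0:ℝ) < (1 + b) ^ (s - 1) := by positivity
  exact div_pos (Real.exp_pos _) this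

lemma sinrG_le_one (s : ℕ) {P : ℝ} (hP : 0 < P) {b : ℝ} (hb : 0 ≤ b) : sinrG s P b ≤ 1 := by
  have h1 : (1:ℝ) ≤ (1 + b) ^ (s - 1) := one_le_pow₀ (by linarith)
  have h2 : Real.exp (-((s : ℝ) * b) / P) ≤ 1 := by
    rw [Real.exp_le_one_iff, neg_div]
    have : 0 ≤ (s:ℝ) * b / P := by positivity
    exact neg_nonpos.2 this
  rw [sinrG, div_le_one (by linarith)]
  linarith

lemma sinrG_le_exp (s : ℕ) (P : ℝ) {b : ℝ} (hb : 0 ≤ b) :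
    sinrG s P b ≤ Real.exp (-((s : ℝ) * b) / P) := by
  have h1 : (1:ℝ) ≤ (1 + b) ^ (s - 1) := one_le_pow₀ (by linarith)
  exact div_le_self (Real.exp_pos _).le h1

lemma aux_exp_div_pow (k : ℕ) {δ a : ℝ} (hδ : 0 < δ) (ha : 0 < a) :
    Tendsto (fun t : ℝ => Real.exp (δ * t) / (1 + a * t) ^ k) atTop atTop := by
  have h1 : Tendsto (fun u : ℝ => Real.exp (δ / a * u) / u ^ k) atTop atTop := by
    simpa [Real.rpow_natCast] using
      tendsto_exp_mul_div_rpow_atTop (k : ℝ) (δ / a) (div_pos hδ ha)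
  have h2 : Tendsto (fun t : ℝ => 1 + a * t) atTop atTop :=
    tendsto_atTop_add_const_left _ 1 (tendsto_id.const_mul_atTop ha)
  have h3 := (h1.comp h2).const_mul_atTop (Real.exp_pos (-(δ / a)))
  refine h3.congr fun t => ?_
  have hane : a ≠ 0 := ha.ne'
  simp only [Function.comp]
  rw [mul_div_assoc', ← Real.exp_add]
  congr 2
  field_simp
  ring

lemma aux_NG (s : ℕ) {P : ℝ} (hP : 0 < P) {a : ℝ} (ha : 0 < a) (hlt : (s:ℝ) * a / P < 1) :
    Tendsto (fun N : ℕ => (N:ℝ) * sinrG s P (a * Real.log N)) atTop atTop := by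
  have hδ : 0 < 1 - (s:ℝ) * a / P := by linarith
  set δ := 1 - (s:ℝ) * a / P with hδdef
  have h1 := (aux_exp_div_pow (s-1) hδ ha).comp
    (Real.tendsto_log_atTop.comp tendsto_natCast_atTop_atTop)
  refine h1.congr' ?_
  filter_upwards [eventually_ge_atTop 1] with N hN
  have hN0 : (0:ℝ) < N := by exact_mod_cast Nat.lt_of_lt_of_le Nat.zero_lt_one hN
  have hNe : (N:ℝ) = Real.exp (Real.log N) := (Real.exp_log hN0).symm
  simp only [Function.comp]
  set t := Real.log (N:ℝ) with ht
  rw [sinrG, hNe, mul_div_assoc', ← Real.exp_add]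
  congr 2
  field_simp [hδdef]
  rw [hδdef]
  field_simp
  ring

/-- For each `N ≥ 2`, let `X_1, …, X_N` be i.i.d. with the INR-SINR(s,P)
distribution. Then `(max_{1 ≤ i ≤ N} X_i) / log N` converges in probability to `P / s`
as `N → ∞`. -/
theorem max_sinr_div_log_tendstoInMeasure
    {Ω : Type*} [MeasurableSpace Ω] (μ : Measure Ω) [IsProbabilityMeasure μ]
    (s : ℕ) (hs : 1 ≤ s) (P : ℝ) (hP : 0 < P)
    (X : (N : ℕ) → Fin N → Ω → ℝ)
    (hiid : ∀ N, 2 ≤ N → iIndepFun (X N) μ)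
    (hdist : ∀ N, 2 ≤ N → ∀ i : Fin N, HasSINRDist μ (X N i) s P) :
    TendstoInMeasure μ (fun N ω => (⨆ i : Fin N, X N i ω) / Real.log N)
      atTop (fun _ => P / s) := by
  have hs0 : (0:ℝ) < (s:ℝ) := by exact_mod_cast Nat.lt_of_lt_of_le Nat.zero_lt_one hs
  rw [tendstoInMeasure_iff_dist]
  intro ε hε
  set c : ℝ := P / s with hcdef
  have hc : 0 < c := div_pos hP hs0
  have hGdist : ∀ N, 2 ≤ N → ∀ i : Fin N, ∀ x : ℝ, 0 ≤ x →
      μ {ω | x < X N i ω} = ENNReal.ofReal (sinrG s P x) := fun N hN i x hx =>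
    (hdist N hN i).2 x hx
  set A : ℕ → ℝ := fun N => (N:ℝ) * Real.exp (-((s:ℝ) * ((c + ε/2) * Real.log N)) / P) with hA
  set V : (N : ℕ) → Set Ω := fun N => ⋂ i : Fin N, {ω | X N i ω ≤ (c - ε) * Real.log N} with hV
  have hlogpos : ∀ N : ℕ, 2 ≤ N → 0 < Real.log N := by
    intro N hN
    apply Real.log_pos
    exact_mod_cast Nat.lt_of_lt_of_le Nat.one_lt_two hN
  have hsub : ∀ N : ℕ, 2 ≤ N →
      {ω | ε ≤ dist ((⨆ i : Fin N, X N i ω) / Real.log N) c}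
        ⊆ (⋃ i : Fin N, {ω | (c + ε/2) * Real.log N < X N i ω}) ∪ V N := by
    intro N hN ω hω
    haveI : Nonempty (Fin N) := ⟨⟨0, by omega⟩⟩
    simp only [Set.mem_setOf_eq, Real.dist_eq] at hω
    have hlog := hlogpos N hN
    rcases le_abs.1 hω with h | h
    · left
      have h1 : c + ε ≤ (⨆ i, X N i ω) / Real.log N := by linarith
      have h2 : (c + ε) * Real.log N ≤ ⨆ i, X N i ω := (le_div_iff₀ hlog).1 h1
      have hS : (c + ε/2) * Real.log N < ⨆ i, X N i ω := by nlinarith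
      obtain ⟨i, hi⟩ := exists_lt_of_lt_ciSup hS
      exact Set.mem_iUnion.2 ⟨i, hi⟩
    · right
      have h1 : (⨆ i, X N i ω) / Real.log N ≤ c - ε := by linarith
      have hS : (⨆ i, X N i ω) ≤ (c - ε) * Real.log N := (div_le_iff₀ hlog).1 h1
      exact Set.mem_iInter.2 fun i =>
        le_trans (le_ciSup ((Set.finite_range _).bddAbove) i) hS
  have hU : ∀ N : ℕ, 2 ≤ N →
      μ (⋃ i : Fin N, {ω | (c + ε/2) * Real.log N < X N i ω}) ≤ ENNReal.ofReal (A N) := by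
    intro N hN
    have hx : 0 ≤ (c + ε/2) * Real.log N :=
      mul_nonneg (by linarith) (hlogpos N hN).le
    calc μ (⋃ i : Fin N, {ω | (c + ε/2) * Real.log N < X N i ω})
        ≤ ∑ i : Fin N, μ {ω | (c + ε/2) * Real.log N < X N i ω} :=
          measure_iUnion_fintype_le _ _
      _ = ∑ _i : Fin N, ENNReal.ofReal (sinrG s P ((c + ε/2) * Real.log N)) := by
          exact Finset.sum_congr rfl fun i _ => hGdist N hN i _ hx
      _ ≤ ∑ _i : Fin N, ENNReal.ofReal (Real.exp (-((s:ℝ) * ((c + ε/2) * Real.log N)) / P)) := by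
          exact Finset.sum_le_sum fun i _ =>
            ENNReal.ofReal_le_ofReal (sinrG_le_exp s P hx)
      _ = ENNReal.ofReal (A N) := by
          rw [Finset.sum_const, Finset.card_univ, Fintype.card_fin, hA]
          rw [nsmul_eq_mul, ENNReal.ofReal_mul (Nat.cast_nonneg N), ENNReal.ofReal_natCast]
  have hA0 : Tendsto A atTop (𝓝 0) := by
    have hδ : (0:ℝ) < (s:ℝ) * ε / (2 * P) := by positivity
    have h1 : Tendsto (fun t : ℝ => Real.exp (-((s:ℝ) * ε / (2 * P) * t))) atTop (𝓝 0) :=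
      Real.tendsto_exp_atBot.comp (tendsto_neg_atBot_iff.mpr (tendsto_id.const_mul_atTop hδ))
    have h2 := h1.comp (Real.tendsto_log_atTop.comp tendsto_natCast_atTop_atTop)
    refine h2.congr' ?_
    filter_upwards [eventually_ge_atTop 1] with N hN
    have hN0 : (0:ℝ) < N := by exact_mod_cast Nat.lt_of_lt_of_le Nat.zero_lt_one hN
    have hNe : (N:ℝ) = Real.exp (Real.log N) := (Real.exp_log hN0).symm
    simp only [Function.comp, hA]
    rw [hNe, ← Real.exp_add]
    congr 1
    rw [hcdef]
    field_simp
    rw [Real.log_exp]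
    ring
  have hV0 : Tendsto (fun N => μ (V N)) atTop (𝓝 0) := by
    rcases le_or_gt c ε with hce | hce
    · have hev : ∀ᶠ N in atTop, μ (V N) = 0 := by
        filter_upwards [eventually_ge_atTop 2] with N hN
        have i0 : Fin N := ⟨0, by omega⟩
        have hb : (c - ε) * Real.log N ≤ 0 :=
          mul_nonpos_of_nonpos_of_nonneg (by linarith) (hlogpos N hN).le
        have hsub0 : V N ⊆ {ω | X N i0 ω ≤ 0} := by
          intro ω hω
          simp only [hV, Set.mem_iInter, Set.mem_setOf_eq] at hω
          exact le_trans (hω i0) hb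
        have h1 : μ {ω | (0:ℝ) < X N i0 ω} = 1 := by
          rw [hGdist N hN i0 0 le_rfl]
          simp [sinrG]
        have h0 : μ {ω | X N i0 ω ≤ 0} = 0 := by
          have hcompl : {ω | X N i0 ω ≤ 0} = {ω | (0:ℝ) < X N i0 ω}ᶜ := by
            ext ω; simp [not_lt]
          rw [hcompl, prob_compl_eq_one_sub (measurableSet_lt measurable_const (hdist N hN i0).1), h1]
          simp
        exact le_antisymm (le_trans (measure_mono hsub0) h0.le) (zero_le)
      exact Tendsto.congr' (hev.mono fun N h => h.symm) tendsto_const_nhds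
    · have ha0 : 0 < c - ε := sub_pos.2 hce
      have hlt : (s:ℝ) * (c - ε) / P < 1 := by
        rw [div_lt_one hP]
        have h2 : (s:ℝ) * c = P := by rw [hcdef]; field_simp
        nlinarith
      have hNg := aux_NG s hP ha0 hlt
      have hD : Tendsto
          (fun N : ℕ => Real.exp (-((N:ℝ) * sinrG s P ((c - ε) * Real.log N)))) atTop (𝓝 0) :=
        Real.tendsto_exp_atBot.comp (tendsto_neg_atBot_iff.mpr hNg)
      have hle : ∀ᶠ N in atTop, μ (V N) ≤
          ENNReal.ofReal (Real.exp (-((N:ℝ) * sinrG s P ((c - ε) * Real.log N)))) := by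
        filter_upwards [eventually_ge_atTop 2] with N hN
        have hb : 0 ≤ (c - ε) * Real.log N := mul_nonneg ha0.le (hlogpos N hN).le
        set g := sinrG s P ((c - ε) * Real.log N) with hg
        have hg0 := sinrG_pos s P hb
        have hg1 := sinrG_le_one s hP hb
        have hmeasV : μ (V N) = ENNReal.ofReal ((1 - g) ^ N) := by
          have hind := (hiid N hN).meas_iInter
            (s := fun i => {ω | X N i ω ≤ (c - ε) * Real.log N})
            (fun i => ⟨Set.Iic _, measurableSet_Iic, rfl⟩)
          have hone : ∀ i : Fin N,
              μ {ω | X N i ω ≤ (c - ε) * Real.log N} = ENNReal.ofReal (1 - g) := by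
            intro i
            have hcompl : {ω | X N i ω ≤ (c - ε) * Real.log N}
                = {ω | (c - ε) * Real.log N < X N i ω}ᶜ := by
              ext ω; simp [not_lt]
            rw [hcompl, prob_compl_eq_one_sub (measurableSet_lt measurable_const (hdist N hN i).1),
              hGdist N hN i _ hb, ← hg, ENNReal.ofReal_sub _ hg0.le, ENNReal.ofReal_one]
          simp only [hV]
          rw [hind, Finset.prod_congr rfl fun i _ => hone i, Finset.prod_const,
            Finset.card_univ, Fintype.card_fin,
            ← ENNReal.ofReal_pow (by linarith : (0:ℝ) ≤ 1 - g)]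
        rw [hmeasV]
        apply ENNReal.ofReal_le_ofReal
        calc (1 - g) ^ N ≤ (Real.exp (-g)) ^ N :=
              pow_le_pow_left₀ (by linarith) (by linarith [Real.add_one_le_exp (-g)]) N
          _ = Real.exp (-((N:ℝ) * g)) := by
              rw [← Real.exp_nat_mul]; congr 1; ring
      exact tendsto_of_tendsto_of_tendsto_of_le_of_le' tendsto_const_nhds
        (by simpa using ENNReal.tendsto_ofReal hD)
        (Eventually.of_forall fun N => zero_le) hle
  have hbound : ∀ᶠ N in atTop,
      μ {ω | ε ≤ dist ((⨆ i : Fin N, X N i ω) / Real.log N) c}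
        ≤ ENNReal.ofReal (A N) + μ (V N) := by
    filter_upwards [eventually_ge_atTop 2] with N hN
    exact le_trans (measure_mono (hsub N hN))
      (le_trans (measure_union_le _ _) (add_le_add (hU N hN) le_rfl))
  have hlim : Tendsto (fun N => ENNReal.ofReal (A N) + μ (V N)) atTop (𝓝 0) := by
    have h1 : Tendsto (fun N => ENNReal.ofReal (A N)) atTop (𝓝 0) := by
      simpa using ENNReal.tendsto_ofReal hA0
    simpa using h1.add hV0
  exact tendsto_of_tendsto_of_tendsto_of_le_of_le' tendsto_const_nhds hlim
    (Eventually.of_forall fun N => zero_le) hbound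
end

section
/- Fix an integer s ≥ 1 and a real P > 0. For each N ≥ 3 let X_1, …, X_N be i.i.d. random variables with the INR-SINR(s,P) distribution. Then E[ log(1 + max_{1≤i≤N} X_i) ] − log log N converges to log(P/s) as N → ∞. -/
open MeasureTheory ProbabilityTheory Real Filter

namespace SINRAux

open Set
open scoped ENNReal

noncomputable def G (s : ℕ) (P x : ℝ) : ℝ :=
  Real.exp (-((s : ℝ) * x) / P) / (1 + x) ^ (s - 1)

lemma G_pos {s : ℕ} {P x : ℝ} (hP : 0 < P) (hx : 0 ≤ x) : 0 < G s P x :=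
  div_pos (exp_pos _) (pow_pos (by linarith) _)

lemma G_le_one {s : ℕ} {P x : ℝ} (hP : 0 < P) (hx : 0 ≤ x) : G s P x ≤ 1 := by
  rw [G, div_le_one (pow_pos (by linarith : (0:ℝ) < 1 + x) _)]
  calc Real.exp (-((s : ℝ) * x) / P) ≤ 1 := by
        apply Real.exp_le_one_iff.mpr
        have : (0:ℝ) ≤ (s : ℝ) * x := by positivity
        apply div_nonpos_of_nonpos_of_nonneg (by linarith) hP.le
    _ ≤ (1 + x) ^ (s - 1) := one_le_pow₀ (by linarith)

lemma G_le_exp {s : ℕ} {P x : ℝ} (hP : 0 < P) (hx : 0 ≤ x) :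
    G s P x ≤ Real.exp (-((s : ℝ) * x) / P) := by
  rw [G]
  apply div_le_self (exp_pos _).le (one_le_pow₀ (by linarith))

lemma G_exp_le {s : ℕ} {P t : ℝ} (hP : 0 < P) (ht : 0 ≤ t) :
    G s P (Real.exp t - 1) ≤ Real.exp (-((s : ℝ) / P) * t) := by
  have hx : (0:ℝ) ≤ Real.exp t - 1 := by
    have := Real.one_le_exp ht; linarith
  refine (G_le_exp hP hx).trans ?_
  apply Real.exp_le_exp.mpr
  have ht' : t ≤ Real.exp t - 1 := by have := Real.add_one_le_exp t; linarith
  have hsP : (0:ℝ) ≤ (s : ℝ) / P := by positivity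
  have := mul_le_mul_of_nonneg_left ht' hsP
  have hrw : -((s : ℝ) * (Real.exp t - 1)) / P = -(((s : ℝ) / P) * (Real.exp t - 1)) := by
    ring
  rw [hrw]
  linarith

section PerN

variable {Ω : Type*} [MeasurableSpace Ω] {μ : Measure Ω} [IsProbabilityMeasure μ]
variable {s : ℕ} {P : ℝ} {N : ℕ} {Y : Fin N → Ω → ℝ}

lemma measurable_S (hN : 0 < N) (hm : ∀ i, Measurable (Y i)) :
    Measurable fun ω => ⨆ i, Y i ω := by
  haveI : Nonempty (Fin N) := ⟨⟨0, hN⟩⟩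
  have h : (fun ω => ⨆ i, Y i ω)
      = fun ω => Finset.univ.sup' Finset.univ_nonempty (fun i => Y i ω) := by
    funext ω; rw [Finset.sup'_univ_eq_ciSup]
  rw [h]
  have h2 : (fun ω => Finset.univ.sup' Finset.univ_nonempty (fun i => Y i ω))
      = Finset.univ.sup' Finset.univ_nonempty Y := by
    funext ω; rw [Finset.sup'_apply]
  rw [h2]
  exact Finset.measurable_sup' _ (fun i _ => hm i)

lemma lt_iSup_iff' (hN : 0 < N) (c : ℝ) (ω : Ω) :
    c < (⨆ i, Y i ω) ↔ ∃ i, c < Y i ω := by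
  haveI : Nonempty (Fin N) := ⟨⟨0, hN⟩⟩
  rw [← Finset.sup'_univ_eq_ciSup, Finset.lt_sup'_iff]
  simp

lemma setEq (hN : 0 < N) (c : ℝ) :
    {ω | c < ⨆ i, Y i ω} = ⋃ i, {ω | c < Y i ω} := by
  ext ω
  simp only [mem_setOf_eq, mem_iUnion, lt_iSup_iff' hN]

lemma ae_pos (hN : 0 < N) (hd : ∀ i, HasSINRDist μ (Y i) s P) :
    ∀ᵐ ω ∂μ, 0 < ⨆ i, Y i ω := by
  have hmeas : MeasurableSet {ω | (0:ℝ) < Y ⟨0, hN⟩ ω} := (hd _).1 measurableSet_Ioi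
  have h0 : μ {ω | (0:ℝ) < Y ⟨0, hN⟩ ω} = 1 := by
    rw [(hd ⟨0, hN⟩).2 0 le_rfl]
    norm_num
  have hc : μ ({ω | (0:ℝ) < Y ⟨0, hN⟩ ω}ᶜ) = 0 := by
    rw [measure_compl hmeas (measure_ne_top _ _), measure_univ, h0, tsub_self]
  rw [ae_iff]
  refine measure_mono_null (fun ω hω => ?_) hc
  intro hpos
  have hb : BddAbove (Set.range fun i => Y i ω) := (Set.finite_range _).bddAbove
  exact hω (lt_of_lt_of_le hpos (le_ciSup hb ⟨0, hN⟩))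

lemma meas_lt_log (hN : 0 < N) (hd : ∀ i, HasSINRDist μ (Y i) s P) (t : ℝ) :
    μ {ω | t < Real.log (1 + ⨆ i, Y i ω)} = μ {ω | Real.exp t - 1 < ⨆ i, Y i ω} := by
  apply measure_congr
  rw [Filter.eventuallyEq_set]
  filter_upwards [ae_pos hN hd] with ω hω
  show t < Real.log (1 + ⨆ i, Y i ω) ↔ Real.exp t - 1 < ⨆ i, Y i ω
  rw [Real.lt_log_iff_exp_lt (by linarith), sub_lt_iff_lt_add']

lemma meas_union_le (hP : 0 < P) (hd : ∀ i, HasSINRDist μ (Y i) s P)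
    {c : ℝ} (hc : 0 ≤ c) :
    μ {ω | c < ⨆ i, Y i ω} ≤ (N : ℝ≥0∞) * ENNReal.ofReal (G s P c) := by
  by_cases hN : 0 < N
  · rw [setEq hN c]
    refine (measure_iUnion_fintype_le μ _).trans ?_
    have : ∀ i : Fin N, μ {ω | c < Y i ω} = ENNReal.ofReal (G s P c) := fun i =>
      (hd i).2 c hc
    simp only [this, Finset.sum_const, Finset.card_univ, Fintype.card_fin, nsmul_eq_mul]
    exact le_rfl
  · have hN0 : N = 0 := by omega
    subst hN0
    have hempty : ({ω | c < ⨆ i : Fin 0, Y i ω} : Set Ω) = ∅ := by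
      ext ω
      simp only [Set.mem_setOf_eq, Real.iSup_of_isEmpty, Set.mem_empty_iff_false, iff_false]
      exact not_lt.mpr hc
    rw [hempty]
    simp

noncomputable def Hfun (μ : Measure Ω) (Y : Fin N → Ω → ℝ) : ℝ → ℝ :=
  fun t => (μ {ω | t < Real.log (1 + ⨆ i, Y i ω)}).toReal

lemma H_anti : Antitone (Hfun μ Y) := by
  intro t₁ t₂ h
  apply ENNReal.toReal_mono (measure_ne_top _ _)
  exact measure_mono (fun ω hω => lt_of_le_of_lt h hω)

lemma H_nonneg (t : ℝ) : 0 ≤ Hfun μ Y t := ENNReal.toReal_nonneg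

lemma H_le_one (t : ℝ) : Hfun μ Y t ≤ 1 := by
  rw [Hfun]
  have := prob_le_one (μ := μ) (s := {ω | t < Real.log (1 + ⨆ i, Y i ω)})
  calc (μ _).toReal ≤ (1 : ℝ≥0∞).toReal := ENNReal.toReal_mono ENNReal.one_ne_top this
    _ = 1 := ENNReal.toReal_one

lemma H_le (hN : 0 < N) (hP : 0 < P) (hd : ∀ i, HasSINRDist μ (Y i) s P)
    {t : ℝ} (ht : 0 ≤ t) :
    Hfun μ Y t ≤ N * G s P (Real.exp t - 1) := by
  have hc : (0:ℝ) ≤ Real.exp t - 1 := by have := Real.one_le_exp ht; linarith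
  rw [Hfun, meas_lt_log hN hd t]
  have h1 := meas_union_le hP hd hc (μ := μ) (Y := Y)
  have h2 : ((N : ℝ≥0∞) * ENNReal.ofReal (G s P (Real.exp t - 1))).toReal
      = N * G s P (Real.exp t - 1) := by
    rw [ENNReal.toReal_mul, ENNReal.toReal_natCast,
      ENNReal.toReal_ofReal (G_pos hP hc).le]
  rw [← h2]
  exact ENNReal.toReal_mono (by simp [ENNReal.mul_ne_top]) h1

lemma H_eq (hN : 0 < N) (hP : 0 < P) (hd : ∀ i, HasSINRDist μ (Y i) s P)
    (hind : iIndepFun Y μ) {t : ℝ} (ht : 0 ≤ t) :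
    Hfun μ Y t = 1 - (1 - G s P (Real.exp t - 1)) ^ N := by
  set c : ℝ := Real.exp t - 1 with hcdef
  have hc : (0:ℝ) ≤ c := by have := Real.one_le_exp ht; simp [hcdef]; linarith
  set γ : ℝ≥0∞ := ENNReal.ofReal (G s P c) with hγdef
  have hγ1 : γ ≤ 1 := by
    rw [hγdef, ← ENNReal.ofReal_one]
    exact ENNReal.ofReal_le_ofReal (G_le_one hP hc)
  have hAmeas : ∀ i : Fin N, MeasurableSet {ω | c < Y i ω} := fun i =>
    (hd i).1 measurableSet_Ioi
  have hAc : ∀ i : Fin N, μ ({ω | c < Y i ω}ᶜ) = 1 - γ := by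
    intro i
    rw [measure_compl (hAmeas i) (measure_ne_top _ _), measure_univ, (hd i).2 c hc]
    rfl
  have hInter : μ (⋂ i, {ω | c < Y i ω}ᶜ) = (1 - γ) ^ N := by
    rw [hind.meas_iInter (fun i => ?_)]
    · simp only [hAc, Finset.prod_const, Finset.card_univ, Fintype.card_fin]
    · refine ⟨Set.Iic c, measurableSet_Iic, ?_⟩
      ext ω; simp [not_lt]
  have hUnion : μ (⋃ i, {ω | c < Y i ω}) = 1 - (1 - γ) ^ N := by
    have hm : MeasurableSet (⋃ i, {ω | c < Y i ω}) := MeasurableSet.iUnion hAmeas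
    have h1 : μ ((⋃ i, {ω | c < Y i ω})ᶜ) = 1 - μ (⋃ i, {ω | c < Y i ω}) := by
      rw [measure_compl hm (measure_ne_top _ _), measure_univ]
    rw [Set.compl_iUnion] at h1
    rw [← hInter, h1, ENNReal.sub_sub_cancel ENNReal.one_ne_top prob_le_one]
  rw [Hfun, meas_lt_log hN hd t, setEq hN c, hUnion]
  have hpowle : (1 - γ) ^ N ≤ 1 := pow_le_one' tsub_le_self N
  rw [ENNReal.toReal_sub_of_le hpowle ENNReal.one_ne_top, ENNReal.toReal_one,
    ENNReal.toReal_pow, ENNReal.toReal_sub_of_le hγ1 ENNReal.one_ne_top,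
    ENNReal.toReal_one, hγdef, ENNReal.toReal_ofReal (G_pos hP hc).le]

lemma H_ge (hN : 0 < N) (hP : 0 < P) (hd : ∀ i, HasSINRDist μ (Y i) s P)
    (hind : iIndepFun Y μ) {t : ℝ} (ht : 0 ≤ t) :
    1 - Real.exp (-((N : ℝ) * G s P (Real.exp t - 1))) ≤ Hfun μ Y t := by
  rw [H_eq hN hP hd hind ht]
  have hc : (0:ℝ) ≤ Real.exp t - 1 := by have := Real.one_le_exp ht; linarith
  set g := G s P (Real.exp t - 1) with hg
  have hg0 : 0 < g := G_pos hP hc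
  have hg1 : g ≤ 1 := G_le_one hP hc
  have h1 : (1 - g) ^ N ≤ Real.exp (-g) ^ N := by
    apply pow_le_pow_left₀ (by linarith)
    have := Real.add_one_le_exp (-g); linarith
  have h2 : Real.exp (-g) ^ N = Real.exp (-((N:ℝ) * g)) := by
    rw [← Real.exp_nat_mul]; ring_nf
  linarith [h1, h2.symm.le, h2.le]

lemma f_meas (hN : 0 < N) (hd : ∀ i, HasSINRDist μ (Y i) s P) :
    Measurable fun ω => Real.log (1 + ⨆ i, Y i ω) :=
  Real.measurable_log.comp (measurable_const.add (measurable_S hN fun i => (hd i).1))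

lemma f_nn (hN : 0 < N) (hd : ∀ i, HasSINRDist μ (Y i) s P) :
    0 ≤ᵐ[μ] fun ω => Real.log (1 + ⨆ i, Y i ω) := by
  filter_upwards [ae_pos hN hd] with ω hω
  exact Real.log_nonneg (by linarith)

lemma f_integrable (hN : 0 < N) (hs : 1 ≤ s) (hP : 0 < P)
    (hd : ∀ i, HasSINRDist μ (Y i) s P) :
    Integrable (fun ω => Real.log (1 + ⨆ i, Y i ω)) μ := by
  have hsP : (0:ℝ) < (s : ℝ) / P := by
    apply div_pos _ hP
    exact_mod_cast Nat.pos_of_ne_zero (by omega)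
  refine ⟨(f_meas hN hd).aestronglyMeasurable, ?_⟩
  rw [hasFiniteIntegral_iff_ofReal (f_nn hN hd)]
  rw [lintegral_eq_lintegral_meas_lt μ (f_nn hN hd) (f_meas hN hd).aemeasurable]
  have hbd : ∀ t ∈ Set.Ioi (0:ℝ),
      μ {a | t < Real.log (1 + ⨆ i, Y i a)}
        ≤ ENNReal.ofReal ((N : ℝ) * Real.exp (-((s:ℝ)/P) * t)) := by
    intro t ht
    rw [meas_lt_log hN hd t]
    refine (meas_union_le hP hd (c := Real.exp t - 1)
      (by have := Real.one_le_exp (le_of_lt ht); linarith)).trans ?_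
    rw [ENNReal.ofReal_mul (by positivity), ENNReal.ofReal_natCast]
    exact mul_le_mul_right (ENNReal.ofReal_le_ofReal (G_exp_le hP (le_of_lt ht))) _
  calc ∫⁻ t in Set.Ioi (0:ℝ), μ {a | t < Real.log (1 + ⨆ i, Y i a)}
      ≤ ∫⁻ t in Set.Ioi (0:ℝ), ENNReal.ofReal ((N : ℝ) * Real.exp (-((s:ℝ)/P) * t)) :=
        setLIntegral_mono (by fun_prop) hbd
    _ < ⊤ := by
        have hint : IntegrableOn (fun t : ℝ => (N : ℝ) * Real.exp (-((s:ℝ)/P) * t))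
            (Set.Ioi (0:ℝ)) := (exp_neg_integrableOn_Ioi 0 hsP).const_mul _
        exact hint.lintegral_lt_top

lemma integral_eq (hN : 0 < N) (hs : 1 ≤ s) (hP : 0 < P)
    (hd : ∀ i, HasSINRDist μ (Y i) s P) :
    ∫ ω, Real.log (1 + ⨆ i, Y i ω) ∂μ = ∫ t in Set.Ioi (0:ℝ), Hfun μ Y t :=
  (f_integrable hN hs hP hd).integral_eq_integral_meas_lt (f_nn hN hd)

lemma H_integrableOn (hN : 0 < N) (hs : 1 ≤ s) (hP : 0 < P)
    (hd : ∀ i, HasSINRDist μ (Y i) s P) :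
    IntegrableOn (Hfun μ Y) (Set.Ioi (0:ℝ)) := by
  have hsP : (0:ℝ) < (s : ℝ) / P := by
    apply div_pos _ hP
    exact_mod_cast Nat.pos_of_ne_zero (by omega)
  refine Integrable.mono' ((exp_neg_integrableOn_Ioi 0 hsP).const_mul (N:ℝ))
    (H_anti.measurable.aestronglyMeasurable) ?_
  rw [ae_restrict_iff' measurableSet_Ioi]
  refine Filter.Eventually.of_forall fun t ht => ?_
  rw [Real.norm_eq_abs, abs_of_nonneg (H_nonneg t)]
  calc Hfun μ Y t ≤ N * G s P (Real.exp t - 1) := H_le hN hP hd (le_of_lt ht)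
    _ ≤ N * Real.exp (-((s:ℝ)/P) * t) := by
        apply mul_le_mul_of_nonneg_left (G_exp_le hP (le_of_lt ht)) (by positivity)

set_option maxHeartbeats 1000000 in
lemma upper_bound (hN : 0 < N) (hs : 1 ≤ s) (hP : 0 < P)
    (hd : ∀ i, HasSINRDist μ (Y i) s P) {b : ℝ} (hb : 0 < b)
    (hlam : 1 ≤ (s : ℝ) / P * Real.exp b) :
    ∫ ω, Real.log (1 + ⨆ i, Y i ω) ∂μ
      ≤ b + (N : ℝ) * Real.exp (-((s : ℝ) * (Real.exp b - 1)) / P) := by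
  rw [integral_eq hN hs hP hd]
  have hHint := H_integrableOn hN hs hP hd (μ := μ) (Y := Y)
  have hsplit : Set.Ioi (0:ℝ) = Set.Ioc 0 b ∪ Set.Ioi b := (Set.Ioc_union_Ioi_eq_Ioi hb.le).symm
  rw [hsplit, setIntegral_union (Set.Ioc_disjoint_Ioi le_rfl) measurableSet_Ioi
    (hHint.mono_set (by rw [hsplit]; exact Set.subset_union_left))
    (hHint.mono_set (by rw [hsplit]; exact Set.subset_union_right))]
  have h1 : ∫ t in Set.Ioc (0:ℝ) b, Hfun μ Y t ≤ b := by
    calc ∫ t in Set.Ioc (0:ℝ) b, Hfun μ Y t ≤ ∫ _ in Set.Ioc (0:ℝ) b, (1:ℝ) := by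
          apply setIntegral_mono_on
            (hHint.mono_set (by rw [hsplit]; exact Set.subset_union_left))
            ((integrableOn_const_iff).mpr (Or.inr (by rw [Real.volume_Ioc]; exact ENNReal.ofReal_lt_top)))
            measurableSet_Ioc (fun t _ => H_le_one t)
      _ = b := by
          rw [setIntegral_const, measureReal_def, Real.volume_Ioc, smul_eq_mul, mul_one,
            ENNReal.toReal_ofReal (by linarith), sub_zero]
  set C : ℝ := (N : ℝ) * Real.exp (-((s : ℝ) * (Real.exp b - 1)) / P) with hC
  have hC0 : 0 ≤ C := by positivity
  have hgint : IntegrableOn (fun t : ℝ => C * Real.exp b * Real.exp (-t)) (Set.Ioi b) := by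
    have h0 : IntegrableOn (fun t : ℝ => Real.exp (-1 * t)) (Set.Ioi b) :=
      exp_neg_integrableOn_Ioi b one_pos
    have h1 := h0.const_mul (C * Real.exp b)
    exact IntegrableOn.congr_fun h1 (fun t _ => by rw [neg_one_mul]) measurableSet_Ioi
  have h2 : ∫ t in Set.Ioi b, Hfun μ Y t ≤ C := by
    calc ∫ t in Set.Ioi b, Hfun μ Y t
        ≤ ∫ t in Set.Ioi b, C * Real.exp b * Real.exp (-t) := by
          apply setIntegral_mono_on
            (hHint.mono_set (by rw [hsplit]; exact Set.subset_union_right))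
            hgint measurableSet_Ioi
          intro t ht
          have htb : b ≤ t := le_of_lt ht
          have ht0 : 0 ≤ t := le_trans hb.le htb
          calc Hfun μ Y t ≤ N * G s P (Real.exp t - 1) := H_le hN hP hd ht0
            _ ≤ N * Real.exp (-((s:ℝ) * (Real.exp t - 1)) / P) := by
                apply mul_le_mul_of_nonneg_left
                  (G_le_exp hP (by have := Real.one_le_exp ht0; linarith)) (by positivity)
            _ ≤ C * Real.exp b * Real.exp (-t) := by
                have key : Real.exp (-((s:ℝ) * (Real.exp t - 1)) / P)
                    ≤ Real.exp (-((s : ℝ) * (Real.exp b - 1)) / P) * Real.exp b * Real.exp (-t) := by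
                  rw [← Real.exp_add, ← Real.exp_add]
                  apply Real.exp_le_exp.mpr
                  have hexp : Real.exp b * (t - b) ≤ Real.exp t - Real.exp b := by
                    have h := Real.add_one_le_exp (t - b)
                    have h2 : Real.exp b * ((t - b) + 1) ≤ Real.exp t := by
                      calc Real.exp b * ((t - b) + 1) ≤ Real.exp b * Real.exp (t - b) :=
                            mul_le_mul_of_nonneg_left h (Real.exp_pos b).le
                        _ = Real.exp t := by rw [← Real.exp_add]; ring_nf
                    have hexpand : Real.exp b * ((t - b) + 1)
                        = Real.exp b * (t - b) + Real.exp b := by ring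
                    linarith
                  have hsP : (0:ℝ) ≤ (s:ℝ) / P := by positivity
                  have h2 := mul_le_mul_of_nonneg_left hexp hsP
                  have hlam2 : t - b ≤ (s:ℝ)/P * (Real.exp b * (t - b)) := by
                    have h3 := mul_le_mul_of_nonneg_right hlam (by linarith : (0:ℝ) ≤ t - b)
                    calc t - b = 1 * (t - b) := (one_mul _).symm
                      _ ≤ (s:ℝ)/P * Real.exp b * (t - b) := h3
                      _ = (s:ℝ)/P * (Real.exp b * (t - b)) := by ring
                  have h4 : t - b ≤ (s:ℝ)/P * (Real.exp t - Real.exp b) := le_trans hlam2 h2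
                  have hr1 : -((s:ℝ) * (Real.exp t - 1)) / P
                      = -(((s:ℝ)/P) * (Real.exp t - 1)) := by ring
                  have hr2 : -((s:ℝ) * (Real.exp b - 1)) / P
                      = -(((s:ℝ)/P) * (Real.exp b - 1)) := by ring
                  rw [hr1, hr2]
                  have hexpand : ((s:ℝ)/P) * (Real.exp t - 1)
                      = ((s:ℝ)/P) * (Real.exp b - 1) + ((s:ℝ)/P) * (Real.exp t - Real.exp b) := by
                    ring
                  linarith
                calc (N:ℝ) * Real.exp (-((s:ℝ) * (Real.exp t - 1)) / P)
                    ≤ (N:ℝ) * (Real.exp (-((s : ℝ) * (Real.exp b - 1)) / P)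
                        * Real.exp b * Real.exp (-t)) :=
                      mul_le_mul_of_nonneg_left key (by positivity)
                  _ = C * Real.exp b * Real.exp (-t) := by rw [hC]; ring
      _ = C * Real.exp b * Real.exp (-b) := by
          rw [MeasureTheory.integral_const_mul, integral_exp_neg_Ioi]
      _ = C := by rw [mul_assoc, ← Real.exp_add]; simp
  linarith

lemma lower_bound (hN : 0 < N) (hs : 1 ≤ s) (hP : 0 < P)
    (hd : ∀ i, HasSINRDist μ (Y i) s P)
    (hind : iIndepFun Y μ) {a : ℝ} (ha : 0 < a) :
    a * (1 - Real.exp (-((N : ℝ) * G s P (Real.exp a - 1))))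
      ≤ ∫ ω, Real.log (1 + ⨆ i, Y i ω) ∂μ := by
  rw [integral_eq hN hs hP hd]
  have hHint := H_integrableOn hN hs hP hd (μ := μ) (Y := Y)
  have hsplit : Set.Ioi (0:ℝ) = Set.Ioc 0 a ∪ Set.Ioi a := (Set.Ioc_union_Ioi_eq_Ioi ha.le).symm
  rw [hsplit, setIntegral_union (Set.Ioc_disjoint_Ioi le_rfl) measurableSet_Ioi
    (hHint.mono_set (by rw [hsplit]; exact Set.subset_union_left))
    (hHint.mono_set (by rw [hsplit]; exact Set.subset_union_right))]
  have h2 : 0 ≤ ∫ t in Set.Ioi a, Hfun μ Y t :=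
    setIntegral_nonneg measurableSet_Ioi (fun t _ => H_nonneg t)
  have h1 : a * (1 - Real.exp (-((N : ℝ) * G s P (Real.exp a - 1))))
      ≤ ∫ t in Set.Ioc (0:ℝ) a, Hfun μ Y t := by
    have hconst : ∫ _ in Set.Ioc (0:ℝ) a, (1 - Real.exp (-((N : ℝ) * G s P (Real.exp a - 1))))
        = a * (1 - Real.exp (-((N : ℝ) * G s P (Real.exp a - 1)))) := by
      rw [setIntegral_const, measureReal_def, Real.volume_Ioc, smul_eq_mul,
        ENNReal.toReal_ofReal (by linarith)]
      ring
    rw [← hconst]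
    apply setIntegral_mono_on
      ((integrableOn_const_iff).mpr (Or.inr (by rw [Real.volume_Ioc]; exact ENNReal.ofReal_lt_top)))
      (hHint.mono_set (by rw [hsplit]; exact Set.subset_union_left))
      measurableSet_Ioc
    intro t ht
    calc 1 - Real.exp (-((N : ℝ) * G s P (Real.exp a - 1)))
        ≤ Hfun μ Y a := H_ge hN hP hd hind ha.le
      _ ≤ Hfun μ Y t := H_anti ht.2
  linarith

end PerN

lemma aux_tendsto (ε K : ℝ) (hε : 0 < ε) :
    Tendsto (fun N : ℕ => ε * Real.log N - K * Real.log (Real.log N)) atTop atTop := by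
  have hlog : Tendsto (fun N : ℕ => Real.log N) atTop atTop :=
    Real.tendsto_log_atTop.comp tendsto_natCast_atTop_atTop
  have hoo : (fun N : ℕ => Real.log (Real.log N)) =o[atTop] fun N : ℕ => Real.log N :=
    Real.isLittleO_log_id_atTop.comp_tendsto hlog
  have hc : (0:ℝ) < ε / (2 * (|K| + 1)) := by positivity
  have h2 := hoo.def hc
  apply tendsto_atTop_mono' atTop ?_ (hlog.const_mul_atTop (half_pos hε))
  filter_upwards [h2, hlog.eventually_ge_atTop 0] with N hN hN0
  rw [Real.norm_eq_abs, Real.norm_eq_abs, abs_of_nonneg hN0] at hN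
  have hKll : K * Real.log (Real.log N) ≤ |K| * |Real.log (Real.log N)| := by
    calc K * Real.log (Real.log N) ≤ |K * Real.log (Real.log N)| := le_abs_self _
      _ = |K| * |Real.log (Real.log N)| := abs_mul _ _
  have h3 : |K| * |Real.log (Real.log N)| ≤ |K| * (ε / (2 * (|K| + 1)) * Real.log N) :=
    mul_le_mul_of_nonneg_left hN (abs_nonneg K)
  have h4 : |K| * (ε / (2 * (|K| + 1)) * Real.log N) ≤ ε / 2 * Real.log N := by
    have hK1 : |K| ≤ |K| + 1 := by linarith
    have : |K| * (ε / (2 * (|K| + 1))) ≤ ε / 2 := by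
      rw [mul_comm, div_mul_eq_mul_div, div_le_div_iff₀ (by positivity) (by norm_num)]
      nlinarith [abs_nonneg K, hε.le]
    calc |K| * (ε / (2 * (|K| + 1)) * Real.log N)
        = (|K| * (ε / (2 * (|K| + 1)))) * Real.log N := by ring
      _ ≤ ε / 2 * Real.log N := mul_le_mul_of_nonneg_right this hN0
  have : K * Real.log (Real.log N) ≤ ε / 2 * Real.log N := by linarith
  linarith

end SINRAux

/-- For each `N ≥ 3`, let `X_1, …, X_N` be i.i.d. with the INR-SINR(s,P)
distribution. Then `E[log (1 + max_{1 ≤ i ≤ N} X_i)] − log log N` converges to `log (P / s)`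
as `N → ∞`. -/
theorem expected_rate_of_max_sinr
    {Ω : Type*} [MeasurableSpace Ω] (μ : Measure Ω) [IsProbabilityMeasure μ]
    (s : ℕ) (hs : 1 ≤ s) (P : ℝ) (hP : 0 < P)
    (X : (N : ℕ) → Fin N → Ω → ℝ)
    (hiid : ∀ N, 3 ≤ N → iIndepFun (X N) μ)
    (hdist : ∀ N, 3 ≤ N → ∀ i : Fin N, HasSINRDist μ (X N i) s P) :
    Tendsto
      (fun N : ℕ =>
        (∫ ω, Real.log (1 + ⨆ i : Fin N, X N i ω) ∂μ) - Real.log (Real.log N))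
      atTop (nhds (Real.log (P / s))) := by
  have hsnat : 0 < s := by omega
  have hs0 : (0:ℝ) < (s:ℝ) := by exact_mod_cast hsnat
  have hPs : 0 < P / (s:ℝ) := div_pos hP hs0
  set L : ℝ := Real.log (P / (s:ℝ)) with hL
  refine Metric.tendsto_nhds.mpr fun ε' hε' => ?_
  set ε : ℝ := min (ε'/8) (1/2) with hεdef
  have hε : 0 < ε := lt_min (by linarith) (by norm_num)
  have hε8 : ε ≤ ε'/8 := min_le_left _ _
  have hεh : ε ≤ 1/2 := min_le_right _ _
  clear_value ε
  set cp : ℝ := P / (s:ℝ) * (1 + ε) with hcp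
  set cm : ℝ := P / (s:ℝ) * (1 - ε) with hcm
  have hcp0 : 0 < cp := mul_pos hPs (by linarith)
  have hcm0 : 0 < cm := mul_pos hPs (by linarith)
  clear_value cp cm
  have hlogN : Tendsto (fun N : ℕ => Real.log N) atTop atTop :=
    Real.tendsto_log_atTop.comp tendsto_natCast_atTop_atTop
  -- eventual facts
  have ev1 : ∀ᶠ N : ℕ in atTop, 3 ≤ N := eventually_ge_atTop 3
  have ev2 : ∀ᶠ N : ℕ in atTop, 1 < Real.log N := hlogN.eventually_gt_atTop 1
  have ev3 : ∀ᶠ N : ℕ in atTop, 1/cp < Real.log N := hlogN.eventually_gt_atTop _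
  have ev4 : ∀ᶠ N : ℕ in atTop, 1/cm < Real.log N := hlogN.eventually_gt_atTop _
  have ev5 : ∀ᶠ N : ℕ in atTop, 1 ≤ (1+ε) * Real.log N := by
    filter_upwards [hlogN.eventually_ge_atTop 1] with N h
    nlinarith
  have ev6 : ∀ᶠ N : ℕ in atTop, Real.exp ((s:ℝ)/P - ε * Real.log N) < ε'/4 := by
    have h1 : Tendsto (fun N : ℕ => (s:ℝ)/P - ε * Real.log N) atTop atBot := by
      have h2 := tendsto_atBot_add_const_left atTop ((s:ℝ)/P)
        (tendsto_neg_atTop_atBot.comp (hlogN.const_mul_atTop hε))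
      exact h2.congr fun N => by simp [sub_eq_add_neg]
    have h3 : Tendsto (fun N : ℕ => Real.exp ((s:ℝ)/P - ε * Real.log N)) atTop (nhds 0) :=
      Real.tendsto_exp_atBot.comp h1
    exact h3.eventually (Iio_mem_nhds (by linarith : (0:ℝ) < ε'/4))
  have ev7 : ∀ᶠ N : ℕ in atTop,
      ((s:ℝ)-1) * Real.log cm - (s:ℝ)/P ≤ ε * Real.log N - (s:ℝ) * Real.log (Real.log N) :=
    (SINRAux.aux_tendsto ε (s:ℝ) hε).eventually_ge_atTop _
  have ev8 : ∀ᶠ N : ℕ in atTop,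
      Real.log cm ≤ 1 * Real.log N - 1 * Real.log (Real.log N) :=
    (SINRAux.aux_tendsto 1 1 one_pos).eventually_ge_atTop _
  have ev9 : ∀ᶠ N : ℕ in atTop, Real.log N / (N:ℝ) < ε'/4 := by
    have hlo : Tendsto (fun N : ℕ => Real.log N / (N:ℝ)) atTop (nhds 0) :=
      (Real.isLittleO_log_id_atTop.comp_tendsto tendsto_natCast_atTop_atTop).tendsto_div_nhds_zero
    exact hlo.eventually (Iio_mem_nhds (by linarith : (0:ℝ) < ε'/4))
  filter_upwards [ev1, ev2, ev3, ev4, ev5, ev6, ev7, ev8, ev9]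
    with N h1 h2 h3 h4 h5 h6 h7 h8 h9
  have hN0 : 0 < N := by omega
  have hNpos : (0:ℝ) < (N:ℝ) := by exact_mod_cast hN0
  have hlogpos : (0:ℝ) < Real.log N := by linarith
  set E : ℝ := ∫ ω, Real.log (1 + ⨆ i : Fin N, X N i ω) ∂μ with hE
  -- upper bound
  set b : ℝ := Real.log (cp * Real.log N) with hbdef
  have hcplog : 1 < cp * Real.log N := by
    have := (div_lt_iff₀ hcp0).mp h3
    linarith [this]
  have hb : 0 < b := Real.log_pos hcplog
  have hexpb : Real.exp b = cp * Real.log N := Real.exp_log (by linarith)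
  have hlam : 1 ≤ (s:ℝ)/P * Real.exp b := by
    rw [hexpb]
    have hcalc : (s:ℝ)/P * (cp * Real.log N) = (1+ε) * Real.log N := by
      rw [hcp]; field_simp
    rw [hcalc]; exact h5
  have hub := SINRAux.upper_bound hN0 hs hP (hdist N h1) hb hlam
  have htail : (N:ℝ) * Real.exp (-((s:ℝ) * (Real.exp b - 1)) / P)
      = Real.exp ((s:ℝ)/P - ε * Real.log N) := by
    have hkey : -((s:ℝ) * (cp * Real.log N - 1)) / P
        = (s:ℝ)/P - (1+ε) * Real.log N := by
      rw [hcp]; field_simp; ring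
    calc (N:ℝ) * Real.exp (-((s:ℝ) * (Real.exp b - 1)) / P)
        = Real.exp (Real.log N) * Real.exp (-((s:ℝ) * (cp * Real.log N - 1)) / P) := by
          rw [Real.exp_log hNpos, hexpb]
      _ = Real.exp (Real.log N + (-((s:ℝ) * (cp * Real.log N - 1)) / P)) :=
          (Real.exp_add _ _).symm
      _ = Real.exp ((s:ℝ)/P - ε * Real.log N) := by rw [hkey]; congr 1; ring
  have hbsplit : b = Real.log cp + Real.log (Real.log N) := by
    rw [hbdef, Real.log_mul hcp0.ne' hlogpos.ne']
  have hlogcp : Real.log cp = L + Real.log (1+ε) := by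
    rw [hcp, Real.log_mul hPs.ne' (by linarith), hL]
  have hlog1e : Real.log (1+ε) ≤ ε := by
    have := Real.log_le_sub_one_of_pos (by linarith : (0:ℝ) < 1+ε); linarith
  have hupper : E - Real.log (Real.log N) - L ≤ ε'/8 + ε'/4 := by
    rw [htail] at hub
    have : E ≤ b + Real.exp ((s:ℝ)/P - ε * Real.log N) := hub
    linarith [h6, hbsplit, hlogcp, hlog1e, hε8]
  -- lower bound
  set a : ℝ := Real.log (cm * Real.log N) with hadef
  have hcmlog : 1 < cm * Real.log N := by
    have := (div_lt_iff₀ hcm0).mp h4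
    linarith [this]
  have ha : 0 < a := Real.log_pos hcmlog
  have hexpa : Real.exp a = cm * Real.log N := Real.exp_log (by linarith)
  have hlb := SINRAux.lower_bound hN0 hs hP (hdist N h1) (hiid N h1) ha
  have hcast : ((s-1 : ℕ):ℝ) = (s:ℝ) - 1 := by
    rw [Nat.cast_sub hs, Nat.cast_one]
  have hG : SINRAux.G s P (Real.exp a - 1)
      = Real.exp (-((s:ℝ) * (Real.exp a - 1)) / P - ((s-1 : ℕ):ℝ) * a) := by
    rw [SINRAux.G]
    have h1' : (1 + (Real.exp a - 1)) = Real.exp a := by ring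
    rw [h1', ← Real.exp_nat_mul, ← Real.exp_sub]
  have hNG : (N:ℝ) * SINRAux.G s P (Real.exp a - 1)
      = Real.exp (Real.log N + (-((s:ℝ) * (Real.exp a - 1)) / P - ((s-1 : ℕ):ℝ) * a)) := by
    conv_rhs => rw [Real.exp_add, Real.exp_log hNpos]
    rw [hG]
  have hasplit : a = Real.log cm + Real.log (Real.log N) := by
    rw [hadef, Real.log_mul hcm0.ne' hlogpos.ne']
  have hscm : (s:ℝ) * (cm * Real.log N - 1) / P = (1-ε) * Real.log N - (s:ℝ)/P := by
    rw [hcm]; field_simp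
  have hWge : Real.log (Real.log N)
      ≤ Real.log N + (-((s:ℝ) * (Real.exp a - 1)) / P - ((s-1 : ℕ):ℝ) * a) := by
    rw [hexpa, hcast]
    have hexpand : -((s:ℝ) * (cm * Real.log N - 1)) / P
        = -((1-ε) * Real.log N - (s:ℝ)/P) := by rw [← hscm]; ring
    rw [hexpand, hasplit]
    have h10 : ((s:ℝ)-1) * (Real.log cm + Real.log (Real.log N))
        = ((s:ℝ)-1) * Real.log cm + ((s:ℝ)-1) * Real.log (Real.log N) := by ring
    have h11 : (s:ℝ) * Real.log (Real.log N)
        = ((s:ℝ)-1) * Real.log (Real.log N) + Real.log (Real.log N) := by ring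
    have h12 : (1-ε) * Real.log N = Real.log N - ε * Real.log N := by ring
    linarith [h7, h10, h11, h12]
  have hNGge : Real.log N ≤ (N:ℝ) * SINRAux.G s P (Real.exp a - 1) := by
    rw [hNG]
    calc Real.log N = Real.exp (Real.log (Real.log N)) := (Real.exp_log hlogpos).symm
      _ ≤ _ := Real.exp_le_exp.mpr hWge
  have hδ : Real.exp (-((N:ℝ) * SINRAux.G s P (Real.exp a - 1))) ≤ (N:ℝ)⁻¹ := by
    have hmono : Real.exp (-((N:ℝ) * SINRAux.G s P (Real.exp a - 1)))
        ≤ Real.exp (-(Real.log N)) := Real.exp_le_exp.mpr (neg_le_neg hNGge)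
    have hrw : Real.exp (-(Real.log (N:ℝ))) = (N:ℝ)⁻¹ := by
      rw [Real.exp_neg, Real.exp_log hNpos]
    rwa [hrw] at hmono
  have haleq : a ≤ Real.log N := by
    rw [hasplit]; linarith [h8]
  have hδ0 : 0 ≤ Real.exp (-((N:ℝ) * SINRAux.G s P (Real.exp a - 1))) := (Real.exp_pos _).le
  have hprod : a * Real.exp (-((N:ℝ) * SINRAux.G s P (Real.exp a - 1)))
      ≤ Real.log N * (N:ℝ)⁻¹ :=
    mul_le_mul haleq hδ hδ0 hlogpos.le
  have hdivN : Real.log N * (N:ℝ)⁻¹ = Real.log N / (N:ℝ) := (div_eq_mul_inv _ _).symm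
  have hlogcm : Real.log cm = L + Real.log (1-ε) := by
    rw [hcm, Real.log_mul hPs.ne' (by linarith : (1:ℝ) - ε ≠ 0), hL]
  have hlog1me : -(2*ε) ≤ Real.log (1-ε) := by
    have hE2 : (0:ℝ) < Real.exp (2*ε) := Real.exp_pos _
    have h4' : 1 ≤ (1-ε) * Real.exp (2*ε) := by
      have h2' : 2*ε + 1 ≤ Real.exp (2*ε) := Real.add_one_le_exp (2*ε)
      have hint1 : (1-ε) * (2*ε+1) ≤ (1-ε) * Real.exp (2*ε) :=
        mul_le_mul_of_nonneg_left h2' (by linarith)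
      have hint2 : (1-ε) * (2*ε+1) = 1 + ε - 2*(ε*ε) := by ring
      have hint3 : ε*ε ≤ (1/2)*ε := mul_le_mul_of_nonneg_right hεh hε.le
      linarith [hint1, hint2, hint3]
    have h5' : Real.exp (-(2*ε)) ≤ 1 - ε := by
      rw [Real.exp_neg]
      have := mul_le_mul_of_nonneg_left h4' (inv_nonneg.mpr hE2.le)
      calc (Real.exp (2*ε))⁻¹ = (Real.exp (2*ε))⁻¹ * 1 := (mul_one _).symm
        _ ≤ (Real.exp (2*ε))⁻¹ * ((1-ε) * Real.exp (2*ε)) := this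
        _ = (1-ε) * ((Real.exp (2*ε))⁻¹ * Real.exp (2*ε)) := by ring
        _ = 1 - ε := by rw [inv_mul_cancel₀ hE2.ne']; ring
    have := Real.log_le_log (Real.exp_pos _) h5'
    rwa [Real.log_exp] at this
  have hlower : -(ε'/4 + ε'/2) ≤ E - Real.log (Real.log N) - L := by
    have hexp1 : a * (1 - Real.exp (-((N:ℝ) * SINRAux.G s P (Real.exp a - 1))))
        = a - a * Real.exp (-((N:ℝ) * SINRAux.G s P (Real.exp a - 1))) := by ring
    have hstep : a - Real.log N / (N:ℝ) ≤ E := by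
      rw [hexp1] at hlb
      rw [← hdivN]
      linarith [hprod, hlb]
    rw [hasplit, hlogcm] at hstep
    have hεq : 2*ε ≤ ε'/2 := by linarith
    linarith [h9, hlog1me]
  rw [Real.dist_eq]
  rw [abs_lt]
  constructor
  · linarith [hlower]
  · linarith [hupper]
end

section
/- (Corollary 1, partial INR feedback) Fix integers M ≥ 1, T ≥ 1 and a real P > 0. For each integer K ≥ 3T that is a multiple of T and each s ∈ {1,…,M}, let N_s(K) = (K/T) · C(M−1, s−1), and let X^{(s)}_1, …, X^{(s)}_{N_s(K)} be i.i.d. random variables with the INR-SINR(s,P) distribution (independently across s). Define R_partial(K) = max_{1≤s≤M} s · E[ log(1 + max_{1≤i≤N_s(K)} X^{(s)}_i) ]. Then R_partial(K) − max_{1≤s≤M} [ s · log log( (K/T) · C(M−1, s−1) ) + s · log(P/s) ] converges to 0 as K → ∞ along multiples of T. -/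
open MeasureTheory ProbabilityTheory Real Filter

namespace SINR
open Set

noncomputable def G (s : ℕ) (P : ℝ) (x : ℝ) : ℝ :=
  Real.exp (-((s : ℝ) * x) / P) / (1 + x) ^ (s - 1)

noncomputable def fN (s : ℕ) (P : ℝ) (N : ℕ) (t : ℝ) : ℝ :=
  1 - (1 - G s P (Real.exp t - 1)) ^ N

variable {s : ℕ} {P : ℝ}

lemma one_le_one_add_pow {x : ℝ} (hx : 0 ≤ x) (k : ℕ) : (1:ℝ) ≤ (1 + x) ^ k :=
  one_le_pow₀ (by linarith)

lemma G_pos (hP : 0 < P) {x : ℝ} (hx : 0 ≤ x) : 0 < G s P x :=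
  div_pos (exp_pos _) (lt_of_lt_of_le one_pos (one_le_one_add_pow hx _))

lemma G_le_exp (hP : 0 < P) {x : ℝ} (hx : 0 ≤ x) :
    G s P x ≤ Real.exp (-((s:ℝ)/P) * x) := by
  have h1 : Real.exp (-((s : ℝ) * x) / P) = Real.exp (-((s:ℝ)/P) * x) := by ring_nf
  rw [G, h1]
  exact div_le_self (exp_pos _).le (one_le_one_add_pow hx _)

lemma G_le_one (hP : 0 < P) {x : ℝ} (hx : 0 ≤ x) : G s P x ≤ 1 := by
  refine (G_le_exp hP hx).trans ?_
  rw [exp_le_one_iff]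
  have : 0 ≤ ((s:ℝ)/P) * x := mul_nonneg (by positivity) hx
  linarith

lemma G_anti (hP : 0 < P) {x y : ℝ} (hx : 0 ≤ x) (hxy : x ≤ y) : G s P y ≤ G s P x := by
  have hy : (0:ℝ) ≤ y := hx.trans hxy
  apply div_le_div₀ (exp_pos _).le
  · apply exp_le_exp.2
    apply div_le_div_of_nonneg_right ?_ hP.le
    nlinarith [Nat.cast_nonneg (α := ℝ) s]
  · exact lt_of_lt_of_le one_pos (one_le_one_add_pow hx _)
  · exact pow_le_pow_left₀ (by linarith) (by linarith) _

lemma exp_sub_one_nonneg {t : ℝ} (ht : 0 ≤ t) : 0 ≤ Real.exp t - 1 := by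
  have := Real.one_le_exp ht; linarith

lemma fN_nonneg (hP : 0 < P) (N : ℕ) {t : ℝ} (ht : 0 ≤ t) : 0 ≤ fN s P N t := by
  have hx := exp_sub_one_nonneg ht
  have h1 : (1 - G s P (Real.exp t - 1)) ^ N ≤ 1 :=
    pow_le_one₀ (by linarith [G_le_one (s := s) hP hx]) (by linarith [G_pos (s := s) hP hx])
  simpa [fN] using h1

lemma fN_le_one (hP : 0 < P) (N : ℕ) {t : ℝ} (ht : 0 ≤ t) : fN s P N t ≤ 1 := by
  have hx := exp_sub_one_nonneg ht
  have h1 : 0 ≤ (1 - G s P (Real.exp t - 1)) ^ N :=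
    pow_nonneg (by linarith [G_le_one (s := s) hP hx]) _
  simp only [fN]; linarith

lemma fN_le_NG (hP : 0 < P) (N : ℕ) {t : ℝ} (ht : 0 ≤ t) :
    fN s P N t ≤ N * G s P (Real.exp t - 1) := by
  have hx := exp_sub_one_nonneg ht
  have hg1 : G s P (Real.exp t - 1) ≤ 1 := G_le_one hP hx
  have := one_add_mul_le_pow (a := -(G s P (Real.exp t - 1))) (by linarith) N
  rw [show (1:ℝ) + ↑N * -G s P (Real.exp t - 1) = 1 - ↑N * G s P (Real.exp t - 1) from by ring,
    show (1:ℝ) + -G s P (Real.exp t - 1) = 1 - G s P (Real.exp t - 1) from by ring] at this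
  simp only [fN]
  linarith

lemma fN_le_exp (hP : 0 < P) (N : ℕ) {t : ℝ} (ht : 0 ≤ t) :
    fN s P N t ≤ N * Real.exp (-((s:ℝ)/P) * t) := by
  have hx := exp_sub_one_nonneg ht
  refine (fN_le_NG hP N ht).trans ?_
  have h1 : G s P (Real.exp t - 1) ≤ Real.exp (-((s:ℝ)/P) * (Real.exp t - 1)) :=
    G_le_exp hP hx
  have h2 : Real.exp (-((s:ℝ)/P) * (Real.exp t - 1)) ≤ Real.exp (-((s:ℝ)/P) * t) := by
    apply exp_le_exp.2
    have ht' : t ≤ Real.exp t - 1 := by linarith [Real.add_one_le_exp t]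
    have hc : 0 ≤ (s:ℝ)/P := by positivity
    nlinarith
  exact mul_le_mul_of_nonneg_left (h1.trans h2) (Nat.cast_nonneg N)

lemma continuous_fN (N : ℕ) : Continuous (fN s P N) := by
  have h1 : Continuous fun t : ℝ => G s P (Real.exp t - 1) := by
    apply Continuous.div
    · exact Real.continuous_exp.comp (by continuity)
    · exact (continuous_const.add (Real.continuous_exp.sub continuous_const)).pow _
    · intro t
      have : (1 : ℝ) + (Real.exp t - 1) = Real.exp t := by ring
      rw [this]
      exact pow_ne_zero _ (exp_pos t).ne'
  unfold fN
  continuity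

lemma integrableOn_fN (hs : 1 ≤ s) (hP : 0 < P) (N : ℕ) {a : ℝ} (ha : 0 ≤ a) :
    IntegrableOn (fN s P N) (Ioi a) := by
  have hc : 0 < (s:ℝ)/P := by
    have : (1:ℝ) ≤ (s:ℝ) := by exact_mod_cast hs
    positivity
  apply Integrable.mono' (g := fun t => (N:ℝ) * Real.exp (-((s:ℝ)/P) * t))
  · exact (exp_neg_integrableOn_Ioi a hc).const_mul _
  · exact ((continuous_fN N).aestronglyMeasurable).restrict
  · filter_upwards [ae_restrict_mem measurableSet_Ioi] with t ht
    have ht' : (0:ℝ) ≤ t := le_trans ha (le_of_lt ht)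
    rw [Real.norm_eq_abs, abs_of_nonneg (fN_nonneg hP N ht')]
    exact fN_le_exp hP N ht'

lemma integral_exp_neg_mul_Ioi {c : ℝ} (hc : 0 < c) (a : ℝ) :
    ∫ t in Ioi a, Real.exp (-c * t) = Real.exp (-c * a) / c := by
  have h := integral_comp_mul_left_Ioi (fun x => Real.exp (-x)) a hc
  simp only [smul_eq_mul, integral_exp_neg_Ioi] at h
  calc ∫ t in Ioi a, Real.exp (-c * t) = ∫ t in Ioi a, Real.exp (-(c * t)) := by
        simp [neg_mul]
    _ = c⁻¹ * Real.exp (-(c * a)) := h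
    _ = Real.exp (-c * a) / c := by rw [neg_mul]; ring


noncomputable def Phi (s : ℕ) (P : ℝ) (N : ℕ) : ℝ :=
  ∫ t in Set.Ioi (0:ℝ), fN s P N t

noncomputable def tgt (s : ℕ) (P : ℝ) (N : ℕ) : ℝ :=
  Real.log (Real.log N) + Real.log (P / s)

lemma Phi_le (hs : 1 ≤ s) (hP : 0 < P) (N : ℕ) {a : ℝ} (ha : 0 < a) :
    Phi s P N ≤ a + N * Real.exp ((s:ℝ)/P) * Real.exp (-((s:ℝ)/P * Real.exp a))
      / ((s:ℝ)/P * Real.exp a) := by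
  have hc : 0 < (s:ℝ)/P := by
    have : (1:ℝ) ≤ (s:ℝ) := by exact_mod_cast hs
    positivity
  set c := (s:ℝ)/P with hcdef
  set κ := c * Real.exp a with hκdef
  have hκ : 0 < κ := by positivity
  have hsplit : Phi s P N = (∫ t in Ioc 0 a, fN s P N t) + ∫ t in Ioi a, fN s P N t := by
    rw [Phi, ← Ioc_union_Ioi_eq_Ioi ha.le,
      setIntegral_union (Ioc_disjoint_Ioi le_rfl) measurableSet_Ioi
        ((integrableOn_fN hs hP N le_rfl).mono_set Ioc_subset_Ioi_self)
        (integrableOn_fN hs hP N ha.le)]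
  have h1 : (∫ t in Ioc 0 a, fN s P N t) ≤ a := by
    calc (∫ t in Ioc 0 a, fN s P N t) ≤ ∫ _t in Ioc 0 a, (1:ℝ) := by
          apply setIntegral_mono_on
            ((integrableOn_fN hs hP N le_rfl).mono_set Ioc_subset_Ioi_self)
            (integrableOn_const (by simp [Real.volume_Ioc]))
            measurableSet_Ioc
          intro t ht
          exact fN_le_one hP N ht.1.le
      _ = a := by simp [Real.volume_Ioc, ha.le]
  have h2 : (∫ t in Ioi a, fN s P N t)
      ≤ N * Real.exp c * Real.exp (-κ) / κ := by
    have hpt : ∀ t ∈ Ioi a, fN s P N t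
        ≤ ((N:ℝ) * Real.exp c * Real.exp (-κ) * Real.exp (κ * a)) * Real.exp (-κ * t) := by
      intro t ht
      have hta : a ≤ t := le_of_lt ht
      have ht0 : (0:ℝ) ≤ t := ha.le.trans hta
      refine (fN_le_NG hP N ht0).trans ?_
      have hG : G s P (Real.exp t - 1) ≤ Real.exp c * Real.exp (-(c * Real.exp t)) := by
        refine (G_le_exp hP (exp_sub_one_nonneg ht0)).trans ?_
        rw [← Real.exp_add]
        apply exp_le_exp.2
        ring_nf
        exact le_of_eq (by rw [hcdef]; ring)
      have hexp : Real.exp (-(c * Real.exp t))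
          ≤ Real.exp (-κ) * Real.exp (κ * a) * Real.exp (-κ * t) := by
        rw [← Real.exp_add, ← Real.exp_add]
        apply exp_le_exp.2
        have key : Real.exp a * (1 + (t - a)) ≤ Real.exp t := by
          have h3 : (1 : ℝ) + (t - a) ≤ Real.exp (t - a) := by
            linarith [Real.add_one_le_exp (t - a)]
          have h4 : Real.exp a * (1 + (t - a)) ≤ Real.exp a * Real.exp (t - a) :=
            mul_le_mul_of_nonneg_left h3 (exp_pos a).le
          rwa [← Real.exp_add, add_sub_cancel] at h4
        have : κ * (1 + (t - a)) ≤ c * Real.exp t := by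
          rw [hκdef, mul_assoc]
          exact mul_le_mul_of_nonneg_left (by nlinarith [key]) hc.le
        nlinarith
      calc (N:ℝ) * G s P (Real.exp t - 1)
          ≤ (N:ℝ) * (Real.exp c * (Real.exp (-κ) * Real.exp (κ * a) * Real.exp (-κ * t))) := by
            apply mul_le_mul_of_nonneg_left ?_ (Nat.cast_nonneg N)
            calc G s P (Real.exp t - 1) ≤ Real.exp c * Real.exp (-(c * Real.exp t)) := hG
              _ ≤ Real.exp c * (Real.exp (-κ) * Real.exp (κ * a) * Real.exp (-κ * t)) :=
                  mul_le_mul_of_nonneg_left hexp (exp_pos c).le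
        _ = ((N:ℝ) * Real.exp c * Real.exp (-κ) * Real.exp (κ * a)) * Real.exp (-κ * t) := by
            ring
    calc (∫ t in Ioi a, fN s P N t)
        ≤ ∫ t in Ioi a, ((N:ℝ) * Real.exp c * Real.exp (-κ) * Real.exp (κ * a)) * Real.exp (-κ * t) := by
          apply setIntegral_mono_on (integrableOn_fN hs hP N ha.le)
            ((exp_neg_integrableOn_Ioi a hκ).const_mul _) measurableSet_Ioi hpt
      _ = ((N:ℝ) * Real.exp c * Real.exp (-κ) * Real.exp (κ * a)) * (Real.exp (-κ * a) / κ) := by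
          rw [MeasureTheory.integral_const_mul, integral_exp_neg_mul_Ioi hκ]
      _ = N * Real.exp c * Real.exp (-κ) / κ := by
          rw [neg_mul, Real.exp_neg (κ * a)]
          field_simp
  linarith [hsplit, h1, h2]

lemma Phi_ge (hs : 1 ≤ s) (hP : 0 < P) (N : ℕ) {b : ℝ} (hb : 0 < b) :
    b - b * Real.exp (-((N:ℝ) * G s P (Real.exp b - 1))) ≤ Phi s P N := by
  have hxb : 0 ≤ Real.exp b - 1 := exp_sub_one_nonneg hb.le
  set g := G s P (Real.exp b - 1) with hgdef
  have hg0 : 0 < g := G_pos hP hxb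
  have hg1 : g ≤ 1 := G_le_one hP hxb
  have hsplit : Phi s P N = (∫ t in Ioc 0 b, fN s P N t) + ∫ t in Ioi b, fN s P N t := by
    rw [Phi, ← Ioc_union_Ioi_eq_Ioi hb.le,
      setIntegral_union (Ioc_disjoint_Ioi le_rfl) measurableSet_Ioi
        ((integrableOn_fN hs hP N le_rfl).mono_set Ioc_subset_Ioi_self)
        (integrableOn_fN hs hP N hb.le)]
  have h2 : 0 ≤ ∫ t in Ioi b, fN s P N t := by
    apply setIntegral_nonneg measurableSet_Ioi
    intro t ht
    exact fN_nonneg hP N (hb.le.trans (le_of_lt ht))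
  have h1 : b * (1 - Real.exp (-((N:ℝ) * g))) ≤ ∫ t in Ioc 0 b, fN s P N t := by
    have hpt : ∀ t ∈ Ioc 0 b, 1 - Real.exp (-((N:ℝ) * g)) ≤ fN s P N t := by
      intro t ht
      have ht0 : 0 ≤ t := ht.1.le
      have hxt : 0 ≤ Real.exp t - 1 := exp_sub_one_nonneg ht0
      have hgt : g ≤ G s P (Real.exp t - 1) :=
        G_anti hP hxt (by simp [Real.exp_le_exp, ht.2])
      have hGt1 : G s P (Real.exp t - 1) ≤ 1 := G_le_one hP hxt
      have step1 : (1 - G s P (Real.exp t - 1)) ^ N ≤ (1 - g) ^ N :=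
        pow_le_pow_left₀ (by linarith) (by linarith) N
      have step2 : (1 - g) ^ N ≤ Real.exp (-((N:ℝ) * g)) := by
        have hbase : 1 - g ≤ Real.exp (-g) := by linarith [Real.add_one_le_exp (-g)]
        calc (1 - g) ^ N ≤ (Real.exp (-g)) ^ N := pow_le_pow_left₀ (by linarith) hbase N
          _ = Real.exp (-((N:ℝ) * g)) := by
              rw [← Real.exp_nat_mul]; ring_nf
      simp only [fN]
      linarith
    calc b * (1 - Real.exp (-((N:ℝ) * g)))
        = ∫ _t in Ioc 0 b, (1 - Real.exp (-((N:ℝ) * g))) := by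
          simp [Real.volume_Ioc, hb.le]
      _ ≤ ∫ t in Ioc 0 b, fN s P N t := by
          apply setIntegral_mono_on
            (integrableOn_const (by simp [Real.volume_Ioc]))
            ((integrableOn_fN hs hP N le_rfl).mono_set Ioc_subset_Ioi_self)
            measurableSet_Ioc hpt
  nlinarith [hsplit, h1, h2]


lemma tendsto_logN : Tendsto (fun N : ℕ => Real.log (N:ℝ)) atTop atTop :=
  Real.tendsto_log_atTop.comp tendsto_natCast_atTop_atTop

lemma phi_sub_tendsto (hs : 1 ≤ s) (hP : 0 < P) :
    Tendsto (fun N : ℕ => Phi s P N - tgt s P N) atTop (nhds 0) := by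
  have hs0 : (0:ℝ) < (s:ℝ) := by exact_mod_cast hs
  have hc : 0 < (s:ℝ)/P := by positivity
  have hβ : 0 < P/(s:ℝ) := by positivity
  set c := (s:ℝ)/P with hcdef
  set β := P/(s:ℝ) with hβdef
  rw [NormedAddCommGroup.tendsto_nhds_zero]
  intro ε hε
  set q := Real.exp (ε/2) with hqdef
  have hq1 : 1 < q := by rw [hqdef, ← Real.exp_zero, Real.exp_lt_exp]; linarith
  set r := Real.exp (-(ε/2)) with hrdef
  have hr0 : 0 < r := exp_pos _
  have hr1 : r < 1 := by rw [hrdef, ← Real.exp_zero, Real.exp_lt_exp]; linarith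
  set L := fun N : ℕ => Real.log (N:ℝ) with hLdef
  have hL : Tendsto L atTop atTop := tendsto_logN
  -- upper error term tends to 0
  have hUten : Tendsto (fun N => Real.exp c * (Real.exp (-((q-1) * L N)) * (q * L N)⁻¹))
      atTop (nhds 0) := by
    have h1 : Tendsto (fun N => Real.exp (-((q-1) * L N))) atTop (nhds 0) := by
      apply Real.tendsto_exp_atBot.comp
      exact tendsto_neg_atTop_atBot.comp (Tendsto.const_mul_atTop (by linarith) hL)
    have h2 : Tendsto (fun N => (q * L N)⁻¹) atTop (nhds 0) :=
      tendsto_inv_atTop_zero.comp (Tendsto.const_mul_atTop (by linarith) hL)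
    simpa using tendsto_const_nhds.mul (h1.mul h2)
  -- lower error term tends to 0
  have hEten : Tendsto (fun N => L N * Real.exp (-L N)) atTop (nhds 0) := by
    have := (tendsto_pow_mul_exp_neg_atTop_nhds_zero 1).comp hL
    simpa [Function.comp_def] using this
  -- polynomial vs exponential bound
  have hBten : Tendsto (fun N => Real.exp (-c) * ((r * β * L N)^(s-1) * L N)
      * Real.exp (-((1-r) * L N))) atTop (nhds 0) := by
    have hδ : 0 < 1 - r := by linarith
    have base : Tendsto (fun x : ℝ => x^s * Real.exp (-x)) atTop (nhds 0) :=
      tendsto_pow_mul_exp_neg_atTop_nhds_zero s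
    have comp1 : Tendsto (fun x : ℝ => ((1-r)*x)^s * Real.exp (-((1-r)*x))) atTop (nhds 0) :=
      base.comp (Tendsto.const_mul_atTop hδ tendsto_id)
    have key : Tendsto (fun x : ℝ => Real.exp (-c) * ((r * β * x)^(s-1) * x)
        * Real.exp (-((1-r) * x))) atTop (nhds 0) := by
      have := tendsto_const_nhds (x := Real.exp (-c) * (r*β)^(s-1) * ((1-r)^s)⁻¹)
        |>.mul comp1
      rw [mul_zero] at this
      apply this.congr
      intro x
      have hne : ((1:ℝ)-r)^s ≠ 0 := pow_ne_zero _ (by linarith)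
      have hx : (r * β * x)^(s-1) * x = (r*β)^(s-1) * (x^(s-1) * x) := by
        rw [mul_pow]; ring
      have hxs : x^(s-1) * x = x^s := by
        rw [← pow_succ, Nat.sub_add_cancel hs]
      rw [hx, hxs, mul_pow]
      field_simp
      rw [mul_pow]
    exact key.comp hL
  -- collect eventual facts
  have ev1 : ∀ᶠ N : ℕ in atTop, 1 < L N := hL.eventually_gt_atTop 1
  have ev2 : ∀ᶠ N : ℕ in atTop, 0 < Real.log (L N) + Real.log β - ε/2 := by
    have : Tendsto (fun N => Real.log (L N) + Real.log β - ε/2) atTop atTop := by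
      apply tendsto_atTop_add_const_right
      exact tendsto_atTop_add_const_right _ _ (Real.tendsto_log_atTop.comp hL)
    exact this.eventually_gt_atTop 0
  have ev3 : ∀ᶠ N : ℕ in atTop,
      Real.exp c * (Real.exp (-((q-1) * L N)) * (q * L N)⁻¹) < ε/2 :=
    hUten.eventually_lt_const (by linarith)
  have ev4 : ∀ᶠ N : ℕ in atTop, L N * Real.exp (-L N) < ε/2 :=
    hEten.eventually_lt_const (by linarith)
  have ev5 : ∀ᶠ N : ℕ in atTop,
      Real.exp (-c) * ((r * β * L N)^(s-1) * L N) * Real.exp (-((1-r) * L N)) ≤ 1 :=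
    (hBten.eventually_lt_const one_pos).mono (fun N h => h.le)
  have ev6 : ∀ᶠ N : ℕ in atTop, Real.log (L N) ≤ L N / 2 := by
    have hbd := Real.isLittleO_log_id_atTop.bound (by norm_num : (0:ℝ) < 1/2)
    filter_upwards [hL.eventually hbd, ev1] with N h1 h2
    rw [Real.norm_eq_abs, Real.norm_eq_abs, id] at h1
    calc Real.log (L N) ≤ |Real.log (L N)| := le_abs_self _
      _ ≤ 1/2 * |L N| := h1
      _ = L N / 2 := by rw [abs_of_pos (by linarith)]; ring
  have ev7 : ∀ᶠ N : ℕ in atTop, Real.log β - ε/2 ≤ L N / 2 := by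
    filter_upwards [hL.eventually_gt_atTop (2 * |Real.log β|)] with N h
    have := le_abs_self (Real.log β)
    linarith [abs_nonneg (Real.log β)]
  have ev8 : ∀ᶠ N : ℕ in atTop, (1:ℝ) ≤ (N:ℝ) := by
    filter_upwards [eventually_ge_atTop 1] with N h
    exact_mod_cast h
  filter_upwards [ev1, ev2, ev3, ev4, ev5, ev6, ev7, ev8] with N h1 h2 h3 h4 h5 h6 h7 h8
  have hLN : 0 < L N := by linarith
  have expL : Real.exp (L N) = (N:ℝ) := Real.exp_log (by linarith)
  have explogL : Real.exp (Real.log (L N)) = L N := Real.exp_log hLN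
  have expβ : Real.exp (Real.log β) = β := Real.exp_log hβ
  have htgt : tgt s P N = Real.log (L N) + Real.log β := rfl
  -- upper bound
  have hupper : Phi s P N - tgt s P N < ε := by
    have ha : 0 < tgt s P N + ε/2 := by rw [htgt]; linarith
    have hexpa : Real.exp (tgt s P N + ε/2) = q * (β * L N) := by
      rw [htgt, Real.exp_add, Real.exp_add, explogL, expβ, hqdef]; ring
    have hκval : c * Real.exp (tgt s P N + ε/2) = q * L N := by
      rw [hexpa, hcdef, hβdef]
      field_simp
    have hPle := Phi_le hs hP N ha
    rw [hκval] at hPle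
    have hq0 : 0 < q * L N := by positivity
    have heq : (N:ℝ) * Real.exp c * Real.exp (-(q * L N)) / (q * L N)
        = Real.exp c * (Real.exp (-((q-1) * L N)) * (q * L N)⁻¹) := by
      rw [← expL, ← Real.exp_add, ← Real.exp_add, div_eq_mul_inv]
      rw [show L N + c + -(q * L N) = c + -((q-1) * L N) from by ring, Real.exp_add]
      ring
    rw [heq] at hPle
    linarith
  -- lower bound
  have hlower : -ε < Phi s P N - tgt s P N := by
    obtain ⟨b, hbdef⟩ : ∃ b : ℝ, b = tgt s P N - ε/2 := ⟨_, rfl⟩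
    have hb0 : 0 < b := by rw [hbdef, htgt]; linarith
    have hexpb : Real.exp b = r * (β * L N) := by
      rw [hbdef, htgt, sub_eq_add_neg, Real.exp_add, Real.exp_add, explogL, expβ, hrdef]
      ring
    have hA : 0 < (r * β * L N)^(s-1) := by positivity
    set A := (r * β * L N)^(s-1) with hAdef
    -- value of G at exp b - 1
    have hgval : G s P (Real.exp b - 1) = Real.exp c * Real.exp (-(r * L N)) / A := by
      have h9 : (1:ℝ) + (Real.exp b - 1) = Real.exp b := by ring
      have hsne : (s:ℝ) ≠ 0 := hs0.ne'
      have hsb : (s:ℝ) * Real.exp b = r * P * L N := by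
        rw [hexpb, hβdef]
        field_simp
      have h10 : -((s:ℝ) * (Real.exp b - 1)) / P = c - r * L N := by
        rw [hcdef, div_eq_iff hP.ne', sub_mul, div_mul_cancel₀ _ hP.ne']
        linear_combination -hsb
      rw [G, h9, h10, Real.exp_sub, hexpb, hAdef]
      rw [show r * (β * L N) = r * β * L N from by ring, Real.exp_neg]
      field_simp
    -- N * G ≥ L N
    have hALe : A * L N ≤ Real.exp c * Real.exp ((1-r) * L N) := by
      have hpos : (0:ℝ) ≤ Real.exp c * Real.exp ((1-r) * L N) := by positivity
      have h11 := mul_le_mul_of_nonneg_left h5 hpos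
      calc A * L N
          = Real.exp c * Real.exp ((1-r) * L N) *
            (Real.exp (-c) * (A * L N) * Real.exp (-((1-r) * L N))) := by
            rw [show Real.exp c * Real.exp ((1-r) * L N) *
              (Real.exp (-c) * (A * L N) * Real.exp (-((1-r) * L N)))
              = (Real.exp c * Real.exp (-c)) * (Real.exp ((1-r) * L N) *
                Real.exp (-((1-r) * L N))) * (A * L N) from by ring,
              ← Real.exp_add, ← Real.exp_add]
            simp
        _ ≤ Real.exp c * Real.exp ((1-r) * L N) * 1 := h11
        _ = Real.exp c * Real.exp ((1-r) * L N) := mul_one _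
    have hNG : L N ≤ (N:ℝ) * G s P (Real.exp b - 1) := by
      have hval : (N:ℝ) * G s P (Real.exp b - 1)
          = Real.exp c * Real.exp ((1-r) * L N) / A := by
        rw [hgval, ← expL, div_eq_mul_inv, div_eq_mul_inv]
        rw [show Real.exp (L N) * (Real.exp c * Real.exp (-(r * L N)) * A⁻¹)
            = (Real.exp (L N) * Real.exp (-(r * L N))) * Real.exp c * A⁻¹ from by ring,
          ← Real.exp_add]
        rw [show L N + -(r * L N) = (1-r) * L N from by ring]
        ring
      rw [hval, le_div_iff₀ hA, mul_comm]
      exact hALe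
    -- conclude
    have hPge := Phi_ge hs hP N hb0
    have hexpNG : Real.exp (-((N:ℝ) * G s P (Real.exp b - 1))) ≤ Real.exp (-L N) :=
      Real.exp_le_exp.2 (by linarith)
    have hbL : b ≤ L N := by
      rw [hbdef, htgt]; linarith
    have hE : b * Real.exp (-((N:ℝ) * G s P (Real.exp b - 1))) ≤ L N * Real.exp (-L N) := by
      apply mul_le_mul hbL hexpNG (exp_pos _).le (by linarith)
    linarith [hPge, hE, h4, hbdef]
  rw [Real.norm_eq_abs, abs_lt]
  exact ⟨hlower, hupper⟩


section Prob

variable {Ω : Type*} [MeasurableSpace Ω] {μ : Measure Ω} [IsProbabilityMeasure μ]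

lemma integral_log_max (hs : 1 ≤ s) (hP : 0 < P) {N : ℕ} (hN : 0 < N)
    (X : Fin N → Ω → ℝ)
    (hdist : ∀ i, Measurable (X i) ∧ ∀ x : ℝ, 0 ≤ x →
      μ {ω | x < X i ω} = ENNReal.ofReal (Real.exp (-((s : ℝ) * x) / P) / (1 + x) ^ (s - 1)))
    (hprod : ∀ x : ℝ, μ {ω | ∀ i, X i ω ≤ x} = ∏ i, μ {ω | X i ω ≤ x}) :
    ∫ ω, Real.log (1 + ⨆ i, X i ω) ∂μ = Phi s P N := by
  haveI : Nonempty (Fin N) := Fin.pos_iff_nonempty.mp hN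
  have hc : 0 < (s:ℝ)/P := by
    have : (1:ℝ) ≤ (s:ℝ) := by exact_mod_cast hs
    positivity
  have hXm : ∀ i, Measurable (X i) := fun i => (hdist i).1
  set Y := fun ω => ⨆ i, X i ω with hYdef
  have hYm : Measurable Y := Measurable.iSup hXm
  have hbdd : ∀ ω, BddAbove (Set.range fun i => X i ω) :=
    fun ω => (Set.finite_range _).bddAbove
  have hcdf : ∀ x : ℝ, 0 ≤ x → μ {ω | Y ω ≤ x} = ENNReal.ofReal ((1 - G s P x)^N) := by
    intro x hx
    have hset : {ω | Y ω ≤ x} = {ω | ∀ i, X i ω ≤ x} := by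
      ext ω
      simp only [Set.mem_setOf_eq, hYdef]
      exact ciSup_le_iff (hbdd ω)
    have hXi : ∀ i : Fin N, μ {ω | X i ω ≤ x} = ENNReal.ofReal (1 - G s P x) := by
      intro i
      have hcompl : {ω | X i ω ≤ x} = {ω | x < X i ω}ᶜ := by
        ext ω; simp [not_lt]
      rw [hcompl, measure_compl (measurableSet_lt measurable_const (hXm i))
        (measure_ne_top μ _), measure_univ, (hdist i).2 x hx,
        show Real.exp (-((s:ℝ) * x) / P) / (1 + x) ^ (s - 1) = G s P x from rfl,
        ← ENNReal.ofReal_one, ← ENNReal.ofReal_sub _ (G_pos (s := s) hP hx).le]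
    rw [hset, hprod x]
    simp only [hXi]
    rw [Finset.prod_const, ← ENNReal.ofReal_pow (by linarith [G_le_one (s := s) hP hx])]
    congr 1
    simp
  have hsurv : ∀ x : ℝ, 0 ≤ x → μ {ω | x < Y ω} = ENNReal.ofReal (1 - (1 - G s P x)^N) := by
    intro x hx
    have hcompl : {ω | x < Y ω} = {ω | Y ω ≤ x}ᶜ := by
      ext ω; simp [not_le]
    have h01 : (0:ℝ) ≤ 1 - G s P x := by linarith [G_le_one (s := s) hP hx]
    have h02 : (1 - G s P x)^N ≤ 1 :=
      pow_le_one₀ h01 (by linarith [G_pos (s := s) hP hx])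
    rw [hcompl, measure_compl (measurableSet_le hYm measurable_const)
      (measure_ne_top μ _), measure_univ, hcdf x hx,
      ← ENNReal.ofReal_one, ← ENNReal.ofReal_sub _ (pow_nonneg h01 N)]
  have hYpos : ∀ᵐ ω ∂μ, 0 < Y ω := by
    have i0 : Fin N := ⟨0, hN⟩
    have h0 := (hdist i0).2 0 le_rfl
    have h1 : μ {ω | 0 < X i0 ω} = 1 := by
      rw [h0]
      norm_num
    have hm : MeasurableSet {ω | 0 < X i0 ω} :=
      measurableSet_lt measurable_const (hXm i0)
    have h2 : μ {ω | 0 < X i0 ω}ᶜ = 0 := by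
      rw [measure_compl hm (measure_ne_top μ _), measure_univ, h1, tsub_self]
    have h3 : ∀ᵐ ω ∂μ, 0 < X i0 ω := by
      rw [ae_iff]
      have he : {a | ¬ 0 < X i0 a} = {ω | 0 < X i0 ω}ᶜ := by ext ω; simp
      rw [he]
      exact h2
    exact h3.mono fun ω h => lt_of_lt_of_le h (le_ciSup (hbdd ω) i0)
  set Z := fun ω => Real.log (1 + Y ω) with hZdef
  have hZm : Measurable Z := Real.measurable_log.comp (measurable_const.add hYm)
  have hZnn : 0 ≤ᵐ[μ] Z := hYpos.mono fun ω h => Real.log_nonneg (by linarith)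
  have hZsurv : ∀ t ∈ Ioi (0:ℝ), μ {ω | t < Z ω} = ENNReal.ofReal (fN s P N t) := by
    intro t ht
    have hae : {ω | t < Z ω} =ᵐ[μ] {ω | Real.exp t - 1 < Y ω} := by
      rw [Filter.eventuallyEq_set]
      filter_upwards [hYpos] with ω hω
      simp only [Set.mem_setOf_eq, hZdef]
      rw [Real.lt_log_iff_exp_lt (by linarith)]
      constructor <;> intro h <;> linarith
    rw [measure_congr hae, hsurv _ (exp_sub_one_nonneg (le_of_lt ht))]
    rfl
  have hDint : IntegrableOn (fun t => (N:ℝ) * Real.exp (-((s:ℝ)/P) * t)) (Ioi (0:ℝ)) :=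
    (exp_neg_integrableOn_Ioi 0 hc).const_mul _
  have hfin : ∫⁻ ω, ENNReal.ofReal (Z ω) ∂μ < ⊤ := by
    rw [lintegral_eq_lintegral_meas_lt μ hZnn hZm.aemeasurable]
    calc ∫⁻ t in Ioi 0, μ {ω | t < Z ω}
        ≤ ∫⁻ t in Ioi 0, ENNReal.ofReal ((N:ℝ) * Real.exp (-((s:ℝ)/P) * t)) := by
          apply lintegral_mono_ae
          filter_upwards [ae_restrict_mem measurableSet_Ioi] with t ht
          rw [hZsurv t ht]
          exact ENNReal.ofReal_le_ofReal (fN_le_exp hP N (le_of_lt ht))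
      _ < ⊤ := hDint.lintegral_lt_top
  have hZint : Integrable Z μ :=
    ⟨hZm.aestronglyMeasurable, (hasFiniteIntegral_iff_ofReal hZnn).2 hfin⟩
  have key := hZint.integral_eq_integral_meas_lt hZnn
  calc ∫ ω, Real.log (1 + ⨆ i, X i ω) ∂μ = ∫ ω, Z ω ∂μ := rfl
    _ = ∫ t in Ioi 0, (μ {ω | t < Z ω}).toReal := key
    _ = ∫ t in Ioi 0, fN s P N t := by
        apply setIntegral_congr_fun measurableSet_Ioi
        intro t ht
        show (μ {ω | t < Z ω}).toReal = fN s P N t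
        rw [hZsurv t ht, ENNReal.toReal_ofReal (fN_nonneg hP N (le_of_lt ht))]
    _ = Phi s P N := rfl

end Prob



end SINR

open SINR Set

lemma abs_ciSup_sub_ciSup_le {ι : Type*} [Nonempty ι] [Finite ι] (a b : ι → ℝ) {c : ℝ}
    (h : ∀ j, |a j - b j| ≤ c) : |(⨆ j, a j) - ⨆ j, b j| ≤ c := by
  rw [abs_sub_le_iff]
  constructor
  · rw [sub_le_iff_le_add]
    apply ciSup_le
    intro j
    have h2 : b j ≤ ⨆ j, b j := le_ciSup ((Set.finite_range b).bddAbove) j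
    have h3 := (abs_le.1 (h j)).2
    linarith
  · rw [sub_le_iff_le_add]
    apply ciSup_le
    intro j
    have h2 : a j ≤ ⨆ j, a j := le_ciSup ((Set.finite_range a).bddAbove) j
    have h3 := (abs_le.1 (h j)).1
    linarith

/-- **Corollary 1, partial INR feedback.** Fix `M ≥ 1`, `T ≥ 1`, `P > 0`.
For each multiple `K` of `T` with `K ≥ 3 T` and each `s ∈ {1, …, M}` (encoded as `s = j + 1`
for `j : Fin M`), let `X^{(s)}_1, …, X^{(s)}_{(K/T) · C(M−1, s−1)}` be i.i.d. with the
INR-SINR(s,P) distribution, independently across `s`. Then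
`R_partial(K) = max_{1 ≤ s ≤ M} s · E[log (1 + max_i X^{(s)}_i)]` satisfies
`R_partial(K) − max_{1 ≤ s ≤ M} [s log log ((K/T) · C(M−1, s−1)) + s log (P/s)] → 0`
as `K → ∞` along multiples of `T`. -/
theorem partial_inr_throughput_scaling
    {Ω : Type*} [MeasurableSpace Ω] (μ : Measure Ω) [IsProbabilityMeasure μ]
    (M T : ℕ) (hM : 1 ≤ M) (hT : 1 ≤ T) (P : ℝ) (hP : 0 < P)
    (X : (K : ℕ) → (j : Fin M) → Fin (K / T * Nat.choose (M - 1) j) → Ω → ℝ)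
    (hindep : ∀ K, T ∣ K → 3 * T ≤ K →
      iIndepFun
        (fun p : (j : Fin M) × Fin (K / T * Nat.choose (M - 1) j) => X K p.1 p.2) μ)
    (hdist : ∀ K, T ∣ K → 3 * T ≤ K → ∀ (j : Fin M) (i : Fin (K / T * Nat.choose (M - 1) j)),
      HasSINRDist μ (X K j i) ((j : ℕ) + 1) P) :
    Tendsto
      (fun K : ℕ =>
        (⨆ j : Fin M, ((j : ℕ) + 1 : ℝ) *
          ∫ ω, Real.log (1 + ⨆ i : Fin (K / T * Nat.choose (M - 1) j), X K j i ω) ∂μ) -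
        ⨆ j : Fin M, (((j : ℕ) + 1 : ℝ) *
            Real.log (Real.log ((K / T * Nat.choose (M - 1) j : ℕ) : ℝ)) +
          ((j : ℕ) + 1 : ℝ) * Real.log (P / ((j : ℕ) + 1))))
      (atTop ⊓ Filter.principal {K : ℕ | T ∣ K}) (nhds 0) := by
  classical
  haveI : Nonempty (Fin M) := Fin.pos_iff_nonempty.mp hM
  set L : Filter ℕ := atTop ⊓ Filter.principal {K : ℕ | T ∣ K} with hLdef
  have hT0 : 0 < T := hT
  have hchoose : ∀ j : Fin M, 0 < Nat.choose (M - 1) (j : ℕ) := by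
    intro j
    apply Nat.choose_pos
    omega
  have hdivT : Tendsto (fun K : ℕ => K / T) atTop atTop := by
    apply Filter.tendsto_atTop_atTop.2
    intro d
    refine ⟨d * T, fun a ha => ?_⟩
    exact (Nat.le_div_iff_mul_le hT0).2 ha
  have hNtend : ∀ j : Fin M, Tendsto (fun K => K / T * Nat.choose (M - 1) (j : ℕ)) L atTop := by
    intro j
    apply Tendsto.mono_left ?_ inf_le_left
    apply tendsto_atTop_mono (fun K => ?_) hdivT
    exact Nat.le_mul_of_pos_right _ (hchoose j)
  have hdiff : ∀ j : Fin M, Tendsto (fun K : ℕ =>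
      ((j : ℕ) + 1 : ℝ) * Phi ((j : ℕ) + 1) P (K / T * Nat.choose (M - 1) (j : ℕ)) -
      (((j : ℕ) + 1 : ℝ) *
          Real.log (Real.log ((K / T * Nat.choose (M - 1) (j : ℕ) : ℕ) : ℝ)) +
        ((j : ℕ) + 1 : ℝ) * Real.log (P / ((j : ℕ) + 1)))) L (nhds 0) := by
    intro j
    have h0 : Tendsto (fun N : ℕ => Phi ((j : ℕ) + 1) P N - tgt ((j : ℕ) + 1) P N)
        atTop (nhds 0) := phi_sub_tendsto (Nat.le_add_left 1 (j : ℕ)) hP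
    have h1 := (h0.comp (hNtend j)).const_mul (((j : ℕ) + 1 : ℝ))
    rw [mul_zero] at h1
    apply h1.congr
    intro K
    simp only [Function.comp_apply, tgt]
    push_cast
    ring
  have hev : ∀ᶠ K in L, ∀ j : Fin M,
      (∫ ω, Real.log (1 + ⨆ i : Fin (K / T * Nat.choose (M - 1) (j : ℕ)), X K j i ω) ∂μ)
        = Phi ((j : ℕ) + 1) P (K / T * Nat.choose (M - 1) (j : ℕ)) := by
    have hdvd : ∀ᶠ K in L, T ∣ K := by
      apply Filter.Eventually.filter_mono inf_le_right
      exact Filter.eventually_principal.2 fun K hK => hK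
    have hge : ∀ᶠ K in L, 3 * T ≤ K :=
      Filter.Eventually.filter_mono inf_le_left (Filter.eventually_ge_atTop (3 * T))
    filter_upwards [hdvd, hge] with K hKd hKg
    intro j
    have h3 : 3 ≤ K / T := (Nat.le_div_iff_mul_le hT0).2 hKg
    have hNpos : 0 < K / T * Nat.choose (M - 1) (j : ℕ) :=
      Nat.mul_pos (lt_of_lt_of_le (by norm_num) h3) (hchoose j)
    apply integral_log_max (Nat.le_add_left 1 (j : ℕ)) hP hNpos
    · intro i
      exact hdist K hKd hKg j i
    · intro x
      have hind := hindep K hKd hKg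
      let emb : Fin (K / T * Nat.choose (M - 1) (j : ℕ)) ↪
          (j' : Fin M) × Fin (K / T * Nat.choose (M - 1) (j' : ℕ)) :=
        Function.Embedding.sigmaMk
          (β := fun j' : Fin M => Fin (K / T * Nat.choose (M - 1) (j' : ℕ))) j
      have h := hind.measure_inter_preimage_eq_mul
        (S := Finset.univ.map emb)
        (sets := fun _ => Set.Iic x) (fun p _ => measurableSet_Iic)
      have hL : (⋂ p ∈ Finset.univ.map emb,
            (fun p : (j' : Fin M) × Fin (K / T * Nat.choose (M - 1) (j' : ℕ)) =>
              X K p.1 p.2) p ⁻¹' Set.Iic x)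
          = {ω | ∀ i : Fin (K / T * Nat.choose (M - 1) (j : ℕ)), X K j i ω ≤ x} := by
        ext ω
        simp only [Set.mem_iInter, Finset.mem_map, Finset.mem_univ, true_and,
          Function.Embedding.coeFn_mk, Set.mem_preimage, Set.mem_Iic, Set.mem_setOf_eq, emb, Function.Embedding.sigmaMk_apply]
        constructor
        · intro h' i
          exact h' ⟨j, i⟩ ⟨i, rfl⟩
        · rintro h' p ⟨i, rfl⟩
          exact h' i
      rw [hL] at h
      rw [h, Finset.prod_map]
      rfl
  rw [NormedAddCommGroup.tendsto_nhds_zero]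
  intro ε hε
  have hε2 : 0 < ε / 2 := by linarith
  have hj : ∀ᶠ K in L, ∀ j : Fin M,
      |((j : ℕ) + 1 : ℝ) * Phi ((j : ℕ) + 1) P (K / T * Nat.choose (M - 1) (j : ℕ)) -
      (((j : ℕ) + 1 : ℝ) *
          Real.log (Real.log ((K / T * Nat.choose (M - 1) (j : ℕ) : ℕ) : ℝ)) +
        ((j : ℕ) + 1 : ℝ) * Real.log (P / ((j : ℕ) + 1)))| ≤ ε / 2 := by
    rw [Filter.eventually_all]
    intro j
    have := (NormedAddCommGroup.tendsto_nhds_zero.1 (hdiff j)) (ε / 2) hε2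
    filter_upwards [this] with K hK
    rw [Real.norm_eq_abs] at hK
    exact hK.le
  filter_upwards [hj, hev] with K hK1 hK2
  have e1 : (⨆ j : Fin M, ((j : ℕ) + 1 : ℝ) *
        ∫ ω, Real.log (1 + ⨆ i : Fin (K / T * Nat.choose (M - 1) (j : ℕ)), X K j i ω) ∂μ)
      = ⨆ j : Fin M, ((j : ℕ) + 1 : ℝ) *
        Phi ((j : ℕ) + 1) P (K / T * Nat.choose (M - 1) (j : ℕ)) :=
    iSup_congr fun j => by rw [hK2 j]
  rw [Real.norm_eq_abs, e1]
  calc |(⨆ j : Fin M, ((j : ℕ) + 1 : ℝ) *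
        Phi ((j : ℕ) + 1) P (K / T * Nat.choose (M - 1) (j : ℕ))) -
      ⨆ j : Fin M, (((j : ℕ) + 1 : ℝ) *
          Real.log (Real.log ((K / T * Nat.choose (M - 1) (j : ℕ) : ℕ) : ℝ)) +
        ((j : ℕ) + 1 : ℝ) * Real.log (P / ((j : ℕ) + 1)))|
      ≤ ε / 2 := abs_ciSup_sub_ciSup_le _ _ hK1
    _ < ε := by linarith
end

section
/- Fix integers M ≥ 1, T ≥ 1 and a real P > 0. For real K > max(T, e/T) define Φ(K) = max_{1≤s≤M} [ s · log log( K T · C(M−1, s−1) ) + s · log(P/s) ] and Ψ(K) = max_{1≤s≤M} [ s · log log( (K/T) · C(M−1, s−1) ) + s · log(P/s) ], where C(·,·) is the binomial coefficient and s ranges over integers. Then Φ(K) − Ψ(K) → 0 as K → ∞. -/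
open Real Filter

/-- Fix `M ≥ 1`, `T ≥ 1` and `P > 0`. With
`Φ(K) = max_{1 ≤ s ≤ M} [s log log (K T · C(M−1, s−1)) + s log (P/s)]` (full INR feedback)
and `Ψ(K) = max_{1 ≤ s ≤ M} [s log log ((K/T) · C(M−1, s−1)) + s log (P/s)]` (partial INR
feedback), where `s = j + 1` ranges over the integers `1, …, M`, we have
`Φ(K) − Ψ(K) → 0` as `K → ∞`. -/
theorem full_vs_partial_inr_vanishing_gain
    (M T : ℕ) (hM : 1 ≤ M) (hT : 1 ≤ T) (P : ℝ) (hP : 0 < P)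
    (Φ Ψ : ℝ → ℝ)
    (hΦ : ∀ K : ℝ, max (T : ℝ) (Real.exp 1 / T) < K →
      Φ K = ⨆ j : Fin M,
        (((j : ℕ) + 1 : ℝ) *
            Real.log (Real.log (K * T * (Nat.choose (M - 1) j : ℝ))) +
          ((j : ℕ) + 1 : ℝ) * Real.log (P / ((j : ℕ) + 1))))
    (hΨ : ∀ K : ℝ, max (T : ℝ) (Real.exp 1 / T) < K →
      Ψ K = ⨆ j : Fin M,
        (((j : ℕ) + 1 : ℝ) *
            Real.log (Real.log (K / T * (Nat.choose (M - 1) j : ℝ))) +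
          ((j : ℕ) + 1 : ℝ) * Real.log (P / ((j : ℕ) + 1)))) :
    Tendsto (fun K : ℝ => Φ K - Ψ K) atTop (nhds 0) := by
  haveI : Nonempty (Fin M) := ⟨⟨0, hM⟩⟩
  have hT0 : (0:ℝ) < T := by exact_mod_cast hT
  have hT1 : (1:ℝ) ≤ T := by exact_mod_cast hT
  have hlogT : 0 ≤ Real.log T := Real.log_nonneg hT1
  set ε : ℝ → ℝ := fun K => (M : ℝ) * Real.log (1 + 2 * Real.log T / Real.log (K / T)) with hεdef
  have hεlim : Tendsto ε atTop (nhds 0) := by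
    have h1 : Tendsto (fun K : ℝ => Real.log (K / T)) atTop atTop :=
      Real.tendsto_log_atTop.comp (tendsto_id.atTop_div_const hT0)
    have h2 : Tendsto (fun K : ℝ => 2 * Real.log T / Real.log (K / T)) atTop (nhds 0) :=
      Tendsto.div_atTop tendsto_const_nhds h1
    have h3 : Tendsto (fun K : ℝ => 1 + 2 * Real.log T / Real.log (K / T)) atTop (nhds 1) := by
      simpa using (tendsto_const_nhds.add h2)
    have h4 : Tendsto (fun K : ℝ => Real.log (1 + 2 * Real.log T / Real.log (K/T)))
        atTop (nhds 0) := by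
      have := (Real.continuousAt_log one_ne_zero).tendsto.comp h3
      simpa [Function.comp_def] using this
    simpa [hεdef] using h4.const_mul (M : ℝ)
  have key : ∀ᶠ K in atTop, 0 ≤ Φ K - Ψ K ∧ Φ K - Ψ K ≤ ε K := by
    filter_upwards [eventually_gt_atTop (max (T:ℝ) (Real.exp 1 / T)),
      eventually_gt_atTop (Real.exp 1 * T)] with K hK1 hK2
    have hK0 : 0 < K := lt_trans (by positivity) hK2
    have hKT : Real.exp 1 < K / T := (lt_div_iff₀ hT0).mpr (by linarith [hK2])
    have hAB : 1 < Real.log (K / T) := by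
      calc (1:ℝ) = Real.log (Real.exp 1) := (Real.log_exp 1).symm
        _ < Real.log (K / T) := Real.log_lt_log (Real.exp_pos 1) hKT
    -- per-index facts
    have main : ∀ j : Fin M,
        (Real.log (K / T * (Nat.choose (M - 1) j : ℝ)) ≤
          Real.log (K * T * (Nat.choose (M - 1) j : ℝ))) ∧
        1 < Real.log (K / T * (Nat.choose (M - 1) j : ℝ)) ∧
        Real.log (K * T * (Nat.choose (M - 1) j : ℝ)) =
          Real.log (K / T * (Nat.choose (M - 1) j : ℝ)) + 2 * Real.log T := by
      intro j
      have hcpos : 0 < Nat.choose (M - 1) j := Nat.choose_pos (by omega : (j:ℕ) ≤ M - 1)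
      have hc1 : (1:ℝ) ≤ (Nat.choose (M - 1) j : ℝ) := by exact_mod_cast hcpos
      have hc0 : (0:ℝ) < (Nat.choose (M - 1) j : ℝ) := by linarith
      have hL1 : 1 < Real.log (K / T * (Nat.choose (M - 1) j : ℝ)) := by
        calc (1:ℝ) < Real.log (K / T) := hAB
          _ ≤ Real.log (K / T * (Nat.choose (M - 1) j : ℝ)) := by
            apply Real.log_le_log (by positivity)
            exact le_mul_of_one_le_right (by positivity) hc1
      have heq : Real.log (K * T * (Nat.choose (M - 1) j : ℝ)) =
          Real.log (K / T * (Nat.choose (M - 1) j : ℝ)) + 2 * Real.log T := by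
        rw [Real.log_mul (by positivity) (ne_of_gt hc0),
          Real.log_mul (by positivity) (ne_of_gt hc0),
          Real.log_mul (ne_of_gt hK0) (ne_of_gt hT0),
          Real.log_div (ne_of_gt hK0) (ne_of_gt hT0)]
        ring
      refine ⟨?_, hL1, heq⟩
      rw [heq]; linarith
    -- rewrite Φ and Ψ
    have hΦK := hΦ K hK1
    have hΨK := hΨ K hK1
    have hbdd1 : BddAbove (Set.range fun j : Fin M =>
        (((j : ℕ) + 1 : ℝ) *
            Real.log (Real.log (K * T * (Nat.choose (M - 1) j : ℝ))) +
          ((j : ℕ) + 1 : ℝ) * Real.log (P / ((j : ℕ) + 1)))) :=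
      Set.Finite.bddAbove (Set.finite_range _)
    have hbdd2 : BddAbove (Set.range fun j : Fin M =>
        (((j : ℕ) + 1 : ℝ) *
            Real.log (Real.log (K / T * (Nat.choose (M - 1) j : ℝ))) +
          ((j : ℕ) + 1 : ℝ) * Real.log (P / ((j : ℕ) + 1)))) :=
      Set.Finite.bddAbove (Set.finite_range _)
    have hεK : 0 ≤ ε K := by
      have : (1:ℝ) ≤ 1 + 2 * Real.log T / Real.log (K / T) := by
        have : 0 ≤ 2 * Real.log T / Real.log (K / T) := by positivity
        linarith
      have := Real.log_nonneg this
      simp only [hεdef]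
      positivity
    constructor
    · -- Ψ K ≤ Φ K
      rw [hΦK, hΨK, sub_nonneg]
      apply ciSup_mono hbdd1
      intro j
      obtain ⟨hle, hL1, _⟩ := main j
      have : Real.log (Real.log (K / T * (Nat.choose (M - 1) j : ℝ))) ≤
          Real.log (Real.log (K * T * (Nat.choose (M - 1) j : ℝ))) :=
        Real.log_le_log (by linarith) hle
      have hs0 : (0:ℝ) ≤ (j : ℕ) + 1 := by positivity
      nlinarith
    · -- Φ K ≤ Ψ K + ε K
      rw [hΦK, hΨK, sub_le_iff_le_add']
      apply ciSup_le
      intro j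
      obtain ⟨hle, hL1, heq⟩ := main j
      set L := Real.log (K / T * (Nat.choose (M - 1) j : ℝ)) with hLdef
      have hL0 : 0 < L := by linarith
      have hABL : Real.log (K / T) ≤ L := by
        have hcpos : 0 < Nat.choose (M - 1) j := Nat.choose_pos (by omega : (j:ℕ) ≤ M - 1)
        have hc1 : (1:ℝ) ≤ (Nat.choose (M - 1) j : ℝ) := by exact_mod_cast hcpos
        rw [hLdef]
        apply Real.log_le_log (by positivity)
        exact le_mul_of_one_le_right (by positivity) hc1
      have hsplit : Real.log (L + 2 * Real.log T) = L.log + Real.log (1 + 2 * Real.log T / L) := by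
        rw [← Real.log_mul (ne_of_gt hL0) (by positivity)]
        congr 1
        field_simp
      have hmono : Real.log (1 + 2 * Real.log T / L) ≤
          Real.log (1 + 2 * Real.log T / Real.log (K / T)) := by
        apply Real.log_le_log (by positivity)
        have : 2 * Real.log T / L ≤ 2 * Real.log T / Real.log (K / T) :=
          div_le_div_of_nonneg_left (by positivity) (by linarith) hABL
        linarith
      have hs0 : (0:ℝ) ≤ (j : ℕ) + 1 := by positivity
      have hsM : ((j : ℕ) + 1 : ℝ) ≤ (M : ℝ) := by
        have := j.isLt
        exact_mod_cast this
      have hlognn : 0 ≤ Real.log (1 + 2 * Real.log T / L) :=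
        Real.log_nonneg (by
          have : 0 ≤ 2 * Real.log T / L := by positivity
          linarith)
      have step : (((j : ℕ) + 1 : ℝ) *
            Real.log (Real.log (K * T * (Nat.choose (M - 1) j : ℝ))) +
          ((j : ℕ) + 1 : ℝ) * Real.log (P / ((j : ℕ) + 1))) ≤
          (((j : ℕ) + 1 : ℝ) * Real.log L +
          ((j : ℕ) + 1 : ℝ) * Real.log (P / ((j : ℕ) + 1))) + ε K := by
        rw [heq, hsplit]
        have h1 : ((j : ℕ) + 1 : ℝ) * Real.log (1 + 2 * Real.log T / L) ≤ ε K := by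
          simp only [hεdef]
          calc ((j : ℕ) + 1 : ℝ) * Real.log (1 + 2 * Real.log T / L) ≤
              (M : ℝ) * Real.log (1 + 2 * Real.log T / L) :=
                mul_le_mul_of_nonneg_right hsM hlognn
            _ ≤ (M : ℝ) * Real.log (1 + 2 * Real.log T / Real.log (K / T)) :=
                mul_le_mul_of_nonneg_left hmono (by positivity)
        nlinarith [h1]
      refine step.trans (add_le_add_left ?_ (ε K))
      exact le_ciSup hbdd2 j
  have h0 : Tendsto (fun _ : ℝ => (0:ℝ)) atTop (nhds 0) := tendsto_const_nhds
  exact tendsto_of_tendsto_of_tendsto_of_le_of_le' h0 hεlim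
    (key.mono fun K h => h.1) (key.mono fun K h => h.2)
end

section
/- Fix an integer M ≥ 1 and a real P > 0. For real K > e and integer s with 1 ≤ s ≤ M, define f_K(s) = s · log log( K · C(M−1, s−1) ) + s · log(P/s), where C(·,·) is the binomial coefficient. Then there exists K_0 such that for all K ≥ K_0, max_{1≤s≤M} f_K(s) = f_K(M) = M · log log K + M · log(P/M); in particular, max_{1≤s≤M} f_K(s) − ( M · log log K + M · log(P/M) ) → 0 as K → ∞. -/
open Real Filter

noncomputable def inrScaling (M : ℕ) (P : ℝ) (K : ℝ) (s : ℕ) : ℝ :=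
  (s : ℝ) * Real.log (Real.log (K * (Nat.choose (M - 1) (s - 1) : ℝ))) +
    (s : ℝ) * Real.log (P / s)

lemma inrScaling_at_M (M : ℕ) (hM : 1 ≤ M) (P K : ℝ) :
    inrScaling M P K M = (M : ℝ) * Real.log (Real.log K) + (M : ℝ) * Real.log (P / M) := by
  unfold inrScaling
  rw [Nat.choose_self, Nat.cast_one, mul_one]

/-- Fix `M ≥ 1` and `P > 0`. There exists `K₀` such that for all `K ≥ K₀`,
`max_{1 ≤ s ≤ M} f_K(s) = f_K(M) = M log log K + M log (P/M)`; in particular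
`max_{1 ≤ s ≤ M} f_K(s) − (M log log K + M log (P/M)) → 0` as `K → ∞`. -/
theorem inr_scaling_eventually_attained_at_M
    (M : ℕ) (hM : 1 ≤ M) (P : ℝ) (hP : 0 < P) :
    (∃ K₀ : ℝ, Real.exp 1 < K₀ ∧ ∀ K : ℝ, K₀ ≤ K →
      (⨆ j : Fin M, inrScaling M P K ((j : ℕ) + 1)) = inrScaling M P K M ∧
      inrScaling M P K M =
        (M : ℝ) * Real.log (Real.log K) + (M : ℝ) * Real.log (P / M)) ∧
    Tendsto
      (fun K : ℝ =>
        (⨆ j : Fin M, inrScaling M P K ((j : ℕ) + 1)) -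
          ((M : ℝ) * Real.log (Real.log K) + (M : ℝ) * Real.log (P / M)))
      atTop (nhds 0) := by
  have hne : (Finset.Icc 1 M).Nonempty := Finset.nonempty_Icc.mpr hM
  set B : ℝ := (Finset.Icc 1 M).sup' hne
    (fun s => (s : ℝ) * Real.log 2 + (s : ℝ) * Real.log (P / s) - (M : ℝ) * Real.log (P / M))
    with hB
  set Cmax : ℝ := (Finset.Icc 1 M).sup' hne (fun s => ((M - 1).choose (s - 1) : ℝ)) with hC
  set K₀ : ℝ := max (max Cmax (Real.exp (Real.exp (B + 1)))) (Real.exp 2) with hK₀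
  have hK₀e : Real.exp 1 < K₀ := lt_of_lt_of_le (Real.exp_lt_exp.mpr one_lt_two) (le_max_right _ _)
  -- main pointwise claims
  have main : ∀ K : ℝ, K₀ ≤ K →
      (⨆ j : Fin M, inrScaling M P K ((j : ℕ) + 1)) = inrScaling M P K M := by
    intro K hK
    have hK2 : Real.exp 2 ≤ K := le_trans (le_max_right _ _) hK
    have hKC : Cmax ≤ K := le_trans (le_trans (le_max_left _ _) (le_max_left _ _)) hK
    have hKB : Real.exp (Real.exp (B + 1)) ≤ K :=
      le_trans (le_trans (le_max_right _ _) (le_max_left _ _)) hK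
    have hK0 : (0 : ℝ) < K := lt_of_lt_of_le (Real.exp_pos 2) hK2
    have hlogK2 : (2 : ℝ) ≤ Real.log K := (Real.le_log_iff_exp_le hK0).mpr hK2
    have hlogK0 : (0 : ℝ) < Real.log K := by linarith
    have hllK : B + 1 ≤ Real.log (Real.log K) := by
      have : Real.exp (B + 1) ≤ Real.log K := (Real.le_log_iff_exp_le hK0).mpr hKB
      exact (Real.le_log_iff_exp_le hlogK0).mpr this
    have hll0 : (0 : ℝ) ≤ Real.log (Real.log K) := by
      have := Real.log_nonneg (by linarith : (1:ℝ) ≤ Real.log K); linarith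
    -- key : each term is ≤ value at M
    have key : ∀ s : ℕ, 1 ≤ s → s ≤ M → inrScaling M P K s ≤ inrScaling M P K M := by
      intro s hs1 hsM
      rcases eq_or_lt_of_le hsM with heq | hlt
      · subst heq; exact le_refl _
      have hmem : s ∈ Finset.Icc 1 M := Finset.mem_Icc.mpr ⟨hs1, hsM⟩
      set c : ℝ := ((M - 1).choose (s - 1) : ℝ) with hc
      have hc1 : (1 : ℝ) ≤ c := by
        rw [hc]
        have h := Nat.choose_pos (show s - 1 ≤ M - 1 by omega)
        exact_mod_cast Nat.one_le_iff_ne_zero.mpr (Nat.pos_iff_ne_zero.mp h)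
      have hcK : c ≤ K := le_trans (Finset.le_sup' (fun s => (((M : ℕ) - 1).choose (s - 1) : ℝ)) hmem) hKC
      have hKc1 : K ≤ K * c := le_mul_of_one_le_right hK0.le hc1
      have hKc0 : (0 : ℝ) < K * c := lt_of_lt_of_le hK0 hKc1
      have hlogKc : Real.log (K * c) ≤ 2 * Real.log K := by
        rw [Real.log_mul (ne_of_gt hK0) (by linarith)]
        have : Real.log c ≤ Real.log K := Real.log_le_log (by linarith) hcK
        linarith
      have hlogKc2 : (2 : ℝ) ≤ Real.log (K * c) := by
        calc (2:ℝ) ≤ Real.log K := hlogK2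
        _ ≤ Real.log (K * c) := Real.log_le_log hK0 hKc1
      have hllKc : Real.log (Real.log (K * c)) ≤ Real.log 2 + Real.log (Real.log K) := by
        rw [← Real.log_mul (by norm_num) (ne_of_gt hlogK0)]
        exact Real.log_le_log (by linarith) hlogKc
      have hBs : (s : ℝ) * Real.log 2 + (s : ℝ) * Real.log (P / s) - (M : ℝ) * Real.log (P / M)
          ≤ B := by
        rw [hB]
        exact Finset.le_sup' (fun s : ℕ => (s : ℝ) * Real.log 2 + (s : ℝ) * Real.log (P / s) -
          (M : ℝ) * Real.log (P / M)) hmem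
      have hMs : (1 : ℝ) ≤ (M : ℝ) - (s : ℝ) := by
        have : (s : ℝ) + 1 ≤ (M : ℝ) := by exact_mod_cast hlt
        linarith
      have hs0 : (0 : ℝ) ≤ (s : ℝ) := Nat.cast_nonneg s
      rw [inrScaling_at_M M hM]
      unfold inrScaling
      have h1 : (s : ℝ) * Real.log (Real.log (K * c)) ≤
          (s : ℝ) * (Real.log 2 + Real.log (Real.log K)) :=
        mul_le_mul_of_nonneg_left hllKc hs0
      have h2 : Real.log (Real.log K) ≤
          (M : ℝ) * Real.log (Real.log K) - (s : ℝ) * Real.log (Real.log K) := by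
        nlinarith [mul_nonneg (by linarith : (0:ℝ) ≤ (M : ℝ) - (s : ℝ) - 1) hll0]
      linarith
    have hnonempty : Nonempty (Fin M) := ⟨⟨M - 1, by omega⟩⟩
    apply le_antisymm
    · apply ciSup_le
      intro j
      exact key _ (by omega) (by have := j.isLt; omega)
    · have := le_ciSup (f := fun j : Fin M => inrScaling M P K ((j : ℕ) + 1))
        (Set.Finite.bddAbove (Set.finite_range _)) ⟨M - 1, by omega⟩
      simpa [Nat.sub_add_cancel hM] using this
  refine ⟨⟨K₀, hK₀e, fun K hK => ⟨main K hK, inrScaling_at_M M hM P K⟩⟩, ?_⟩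
  have hev : ∀ᶠ K : ℝ in atTop,
      (fun K : ℝ =>
        (⨆ j : Fin M, inrScaling M P K ((j : ℕ) + 1)) -
          ((M : ℝ) * Real.log (Real.log K) + (M : ℝ) * Real.log (P / M))) K = 0 := by
    filter_upwards [eventually_ge_atTop K₀] with K hK
    rw [main K hK, inrScaling_at_M M hM, sub_self]
  exact Tendsto.congr' (hev.mono fun x hx => hx.symm) tendsto_const_nhds
end
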